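/- arXiv:2310.00521 — 5 statements merged into one kernel-verified Lean document; each statement's English description precedes it below -/
import Mathlib

section
/- For every ε ∈ {0,1} and every partition λ of N (with N even if ε = 1), there exists a unique partition λ_X of N such that: (i) every part of λ_X congruent to ε mod 2 has even multiplicity; (ii) λ_X ⪯ λ in dominance order; (iii) every partition μ of N satisfying condition (i) with μ ⪯ λ satisfies μ ⪯ λ_X. (Existence and uniqueness of the ε-collapse.) -/
/-- A partition of `N`: a weakly decreasing function `ℕ → ℕ` (0-indexed parts,
eventually zero) whose sum is `N`. -/
structure NPartition (N : ℕ) where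
  part : ℕ → ℕ
  antitone : ∀ ⦃i j : ℕ⦄, i ≤ j → part j ≤ part i
  bound : ℕ
  bound_zero : ∀ i, bound ≤ i → part i = 0
  sum_parts : ∑ i ∈ Finset.range bound, part i = N

namespace NPartition

variable {M N : ℕ}

/-- Multiplicity of the part `s` in `p` (intended for `s ≥ 1`). -/
def mult (p : NPartition N) (s : ℕ) : ℕ :=
  ((Finset.range p.bound).filter (fun j => p.part j = s)).card

/-- Height `h_p(s) = #{j : p_j ≥ s}`, with the convention that `height p 0`
is the number of (positive) parts of `p`. -/
def height (p : NPartition N) (s : ℕ) : ℕ :=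
  ((Finset.range p.bound).filter (fun j => max s 1 ≤ p.part j)).card

/-- `Dominates lam mu` means `mu ⪯ lam` in the dominance order. -/
def Dominates (lam mu : NPartition N) : Prop :=
  ∀ k : ℕ, ∑ i ∈ Finset.range k, mu.part i ≤ ∑ i ∈ Finset.range k, lam.part i

/-- The transpose (conjugate) part function: `(p*)_i = #{j : p_j ≥ i+1}` (0-indexed). -/
def transposeFun (p : NPartition N) : ℕ → ℕ :=
  fun i => ((Finset.range p.bound).filter (fun j => i + 1 ≤ p.part j)).card

/-- Every (positive) part congruent to `ε` mod 2 has even multiplicity. -/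
def EvenMult (ε : ℕ) (p : NPartition N) : Prop :=
  ∀ s, 1 ≤ s → s % 2 = ε % 2 → mult p s % 2 = 0

/-- Membership in `P_{ε,ε'}(N)`: parts `≡ ε (mod 2)` have even multiplicity and
height `≡ ε' (mod 2)`, including the convention at `s = 0` (whose height is the
number of parts) when `ε = 0`. -/
def SpecialCond (ε ε' : ℕ) (p : NPartition N) : Prop :=
  EvenMult ε p ∧
  (∀ s, 1 ≤ s → mult p s ≠ 0 → s % 2 = ε % 2 → height p s % 2 = ε' % 2) ∧
  (ε = 0 → height p 0 % 2 = ε' % 2)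

/-- `q` is the `ε`-collapse of `p`: the dominance-greatest partition dominated by `p`
all of whose parts `≡ ε (mod 2)` have even multiplicity. -/
def IsCollapse (ε : ℕ) (p q : NPartition N) : Prop :=
  EvenMult ε q ∧ Dominates p q ∧
    ∀ r : NPartition N, EvenMult ε r → Dominates p r → Dominates q r

/-- `q = p⁻`: decrease the smallest (positive) part of `p` by one. -/
def IsMinus (p : NPartition M) (q : NPartition N) : Prop :=
  (∀ i, i + 1 ≠ height p 0 → q.part i = p.part i) ∧
  q.part (height p 0 - 1) = p.part (height p 0 - 1) - 1

/-- `q = p⁺`: increase the largest part of `p` by one. -/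
def IsPlus (p : NPartition M) (q : NPartition N) : Prop :=
  q.part 0 = p.part 0 + 1 ∧ ∀ i, 1 ≤ i → q.part i = p.part i

/-- `q = f_{BC}(p) = (p⁻)_C`. -/
def IsFBC (n : ℕ) (p : NPartition (2*n+1)) (q : NPartition (2*n)) : Prop :=
  ∃ pm : NPartition (2*n), IsMinus p pm ∧ IsCollapse 1 pm q

/-- `q = f_{CB}(p) = (p⁺)_B`. -/
def IsFCB (n : ℕ) (p : NPartition (2*n)) (q : NPartition (2*n+1)) : Prop :=
  ∃ pp : NPartition (2*n+1), IsPlus p pp ∧ IsCollapse 0 pp q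

end NPartition

/-!
While some part `≡ ε (mod 2)` of `p` has odd multiplicity, let `s` be the largest one and move
one box from the last row of length `s` to the first row of length `≤ s - 2`. Every partial sum
of `p` strictly between these rows drops by one, and no `μ ⪯ p` with the parity condition can
reach any of them: where a partial sum of `μ` met that of `p`, `μ` would have a corner, and at a
corner the parity of a partial sum is fixed by the multiplicities of the parts `≡ ε`, which are
all even for `μ` and odd in total for `p`. The sum of squares of the parts decreases, so the
process stops at the collapse; uniqueness is antisymmetry of dominance.
-/

namespace NPartition

open Finset

variable {N : ℕ}

def partialSum (p : NPartition N) (k : ℕ) : ℕ := ∑ i ∈ range k, p.part i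

def sqSum (p : NPartition N) : ℕ := ∑ i ∈ range p.bound, p.part i ^ 2

def congrCount (ε : ℕ) (p : NPartition N) (K : ℕ) : ℕ :=
  #{j ∈ range K | p.part j % 2 = ε % 2}

lemma partialSum_succ (p : NPartition N) (k : ℕ) :
    p.partialSum (k + 1) = p.partialSum k + p.part k :=
  sum_range_succ _ _

lemma dominates_iff {p q : NPartition N} :
    Dominates p q ↔ ∀ k, q.partialSum k ≤ p.partialSum k :=
  Iff.rfl

lemma Dominates.partialSum_le {p q : NPartition N} (h : Dominates p q) (k : ℕ) :
    q.partialSum k ≤ p.partialSum k :=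
  h k

lemma lt_bound_of_pos (p : NPartition N) {i : ℕ} (h : 0 < p.part i) : i < p.bound := by
  by_contra hi
  rw [p.bound_zero i (not_lt.1 hi)] at h
  exact h.false

lemma exists_part_eq_of_mult_ne_zero {p : NPartition N} {v : ℕ} (h : p.mult v ≠ 0) :
    ∃ j, p.part j = v := by
  obtain ⟨j, hj⟩ := card_ne_zero.1 h
  exact ⟨j, (mem_filter.1 hj).2⟩

lemma le_part_zero_of_mult_ne_zero {p : NPartition N} {v : ℕ} (h : p.mult v ≠ 0) :
    v ≤ p.part 0 := by
  obtain ⟨j, rfl⟩ := exists_part_eq_of_mult_ne_zero h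
  exact p.antitone j.zero_le

lemma sum_range_eq_of_forall_le {f : ℕ → ℕ} {K M : ℕ} (hKM : K ≤ M)
    (hf : ∀ j, K ≤ j → f j = 0) : ∑ i ∈ range M, f i = ∑ i ∈ range K, f i :=
  (sum_subset (range_subset_range.2 hKM) fun i _ hi => hf i (not_lt.1 (mem_range.not.1 hi))).symm

lemma sum_range_add_ite_eq {f g : ℕ → ℕ} {i j x y : ℕ}
    (h : ∀ k, f k + (if k = i then x else 0) = g k + (if k = j then y else 0)) (K : ℕ) :
    ∑ k ∈ range K, f k + (if i < K then x else 0) =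
      ∑ k ∈ range K, g k + (if j < K then y else 0) := by
  simpa only [sum_add_distrib, sum_ite_eq', mem_range] using
    sum_congr (s₁ := range K) rfl fun k _ => h k

lemma partialSum_eq_of_forall_le (p : NPartition N) {K : ℕ} (hK : ∀ j, K ≤ j → p.part j = 0) :
    p.partialSum K = N := by
  rw [partialSum, ← sum_range_eq_of_forall_le (le_max_left K p.bound) hK,
    sum_range_eq_of_forall_le (le_max_right K p.bound) p.bound_zero, p.sum_parts]

lemma exists_forall_lt_iff (p : NPartition N) (t : ℕ) : ∃ K, ∀ j, j < K ↔ t < p.part j := by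
  have hex : ∃ j, p.part j ≤ t := ⟨p.bound, by rw [p.bound_zero _ le_rfl]; exact t.zero_le⟩
  refine ⟨Nat.find hex, fun j => ⟨fun hj => not_le.1 (Nat.find_min hex hj), fun hj => ?_⟩⟩
  by_contra hle
  exact absurd ((p.antitone (not_lt.1 hle)).trans (Nat.find_spec hex)) (not_le.2 hj)

lemma congrCount_succ (ε : ℕ) (p : NPartition N) (K : ℕ) :
    p.congrCount ε (K + 1) = p.congrCount ε K + if p.part K % 2 = ε % 2 then 1 else 0 := by
  simp only [congrCount, range_add_one, filter_insert]
  split_ifs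
  · exact card_insert_of_notMem (by simp)
  · rfl

/-- Each part `p_j` contributes `p_j + ε + 1`, which is odd exactly when `p_j ≡ ε (mod 2)`. -/
lemma partialSum_add_mul_mod_two (ε : ℕ) (p : NPartition N) (K : ℕ) :
    (p.partialSum K + K * (ε + 1)) % 2 = p.congrCount ε K % 2 := by
  induction K with
  | zero => simp [partialSum, congrCount]
  | succ K ih =>
    rw [partialSum_succ, congrCount_succ, add_mul, one_mul]
    split_ifs <;> omega

lemma congrCount_eq_sum_mult (ε : ℕ) (p : NPartition N) {t K : ℕ}
    (hK : ∀ j, j < K ↔ t < p.part j) :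
    p.congrCount ε K = ∑ v ∈ Ioc t (p.part 0) with v % 2 = ε % 2, p.mult v := by
  rw [congrCount, card_eq_sum_card_fiberwise (f := p.part) fun j hj => ?_]
  · refine sum_congr rfl fun v hv => ?_
    rw [mem_filter, mem_Ioc] at hv
    unfold mult
    congr 1
    ext j
    simp only [mem_filter, mem_range]
    constructor
    · rintro ⟨⟨-, -⟩, rfl⟩
      exact ⟨p.lt_bound_of_pos (by omega), rfl⟩
    · rintro ⟨-, rfl⟩
      exact ⟨⟨(hK j).2 hv.1.1, hv.2⟩, rfl⟩
  · simp only [coe_filter, mem_range, Set.mem_ofPred_eq, mem_Ioc] at hj ⊢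
    exact ⟨⟨(hK j).1 hj.1, p.antitone j.zero_le⟩, hj.2⟩

lemma EvenMult.partialSum_add_mul_mod_two {ε : ℕ} {p : NPartition N} (hp : EvenMult ε p)
    {t K : ℕ} (hK : ∀ j, j < K ↔ t < p.part j) : (p.partialSum K + K * (ε + 1)) % 2 = 0 := by
  rw [NPartition.partialSum_add_mul_mod_two, congrCount_eq_sum_mult ε p hK, sum_nat_mod,
    sum_eq_zero fun v hv => hp v (by rw [mem_filter, mem_Ioc] at hv; omega) (mem_filter.1 hv).2,
    Nat.zero_mod]

structure IsMaxOddMult (ε : ℕ) (p : NPartition N) (s : ℕ) : Prop where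
  one_le : 1 ≤ s
  mod_two : s % 2 = ε % 2
  odd_mult : p.mult s % 2 = 1
  even_mult_of_lt : ∀ v, s < v → v % 2 = ε % 2 → p.mult v % 2 = 0

lemma exists_isMaxOddMult {ε : ℕ} {p : NPartition N} (hp : ¬ EvenMult ε p) :
    ∃ s, IsMaxOddMult ε p s := by
  simp only [EvenMult, not_forall] at hp
  obtain ⟨s₀, hs₀, hε₀, hodd₀⟩ := hp
  let IsOdd v := 1 ≤ v ∧ v % 2 = ε % 2 ∧ p.mult v % 2 = 1
  have hle : s₀ ≤ p.part 0 := le_part_zero_of_mult_ne_zero (by omega)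
  obtain ⟨hs1, hsε, hsodd⟩ := Nat.findGreatest_spec (P := IsOdd) hle ⟨hs₀, hε₀, by omega⟩
  refine ⟨_, hs1, hsε, hsodd, fun v hv hvε => ?_⟩
  by_contra hodd
  have hv0 : v ≤ p.part 0 := le_part_zero_of_mult_ne_zero (by omega)
  exact Nat.findGreatest_is_greatest hv hv0 ⟨by omega, hvε, by omega⟩

namespace IsMaxOddMult

variable {ε s a b : ℕ} {p : NPartition N}

lemma exists_part_eq (hs : IsMaxOddMult ε p s) : ∃ j, p.part j = s :=
  exists_part_eq_of_mult_ne_zero (by have := hs.odd_mult; omega)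

lemma pos_of_forall_lt_iff (hs : IsMaxOddMult ε p s)
    (ha : ∀ j, j < a ↔ s - 1 < p.part j) : 0 < a := by
  obtain ⟨j, hj⟩ := hs.exists_part_eq
  have := (ha j).2 (by have := hs.one_le; omega)
  omega

lemma partialSum_add_mul_mod_two (hs : IsMaxOddMult ε p s) {K : ℕ}
    (hK : ∀ j, j < K ↔ s - 1 < p.part j) : (p.partialSum K + K * (ε + 1)) % 2 = 1 := by
  have hmem : s ∈ {v ∈ Ioc (s - 1) (p.part 0) | v % 2 = ε % 2} := by
    obtain ⟨j, hj⟩ := hs.exists_part_eq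
    simp only [mem_filter, mem_Ioc]
    exact ⟨⟨by have := hs.one_le; omega, hj ▸ p.antitone j.zero_le⟩, hs.mod_two⟩
  rw [NPartition.partialSum_add_mul_mod_two, congrCount_eq_sum_mult ε p hK,
    ← add_sum_erase _ _ hmem, Nat.add_mod, hs.odd_mult, sum_nat_mod, sum_eq_zero fun v hv => by
      simp only [mem_erase, mem_filter, mem_Ioc] at hv
      exact hs.even_mult_of_lt v (by omega) hv.2.2, Nat.zero_mod]

/-- A partition of `N` all of whose parts `≡ ε` have even multiplicity forces `N` even when
`ε` is odd; so if one exists, `s = 1` is impossible. -/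
lemma two_le (hs : IsMaxOddMult ε p s) (hne : ∃ r : NPartition N, EvenMult ε r) : 2 ≤ s := by
  by_contra hlt
  have hs1 : s = 1 := by have := hs.one_le; omega
  have hε : (ε + 1) % 2 = 0 := by have := hs.mod_two; omega
  obtain ⟨r, hr⟩ := hne
  obtain ⟨K, hK⟩ := p.exists_forall_lt_iff 0
  obtain ⟨L, hL⟩ := r.exists_forall_lt_iff 0
  have hpN := hs.partialSum_add_mul_mod_two (K := K) (by simpa [hs1] using hK)
  have hrN := hr.partialSum_add_mul_mod_two hL
  rw [p.partialSum_eq_of_forall_le fun j hj => by have := (hK j).not.1 (by omega); omega,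
    Nat.add_mod, Nat.mul_mod, hε] at hpN
  rw [r.partialSum_eq_of_forall_le fun j hj => by have := (hL j).not.1 (by omega); omega,
    Nat.add_mod, Nat.mul_mod, hε] at hrN
  omega

lemma partialSum_add_mul_mod_two_of_le (hs : IsMaxOddMult ε p s)
    (ha : ∀ j, j < a ↔ s - 1 < p.part j) (hb : ∀ j, j < b ↔ s - 2 < p.part j) {k : ℕ}
    (hak : a ≤ k) (hkb : k ≤ b) : (p.partialSum k + k * (ε + 1)) % 2 = 1 := by
  induction k, hak using Nat.le_induction with
  | base => exact hs.partialSum_add_mul_mod_two ha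
  | succ k hak ih =>
    have hpk : p.part k = s - 1 := by
      have := (ha k).not.1 (by omega)
      have := (hb k).1 (by omega)
      omega
    have := ih (by omega)
    have := hs.mod_two
    have := hs.one_le
    rw [partialSum_succ, add_mul, one_mul]
    omega

/-- Where `μ` meets `p`, it cannot drop below `s - 1`: otherwise it would have a corner there,
and the parities of the partial sums of `μ` and of `p` disagree at such a place. -/
lemma le_part_of_partialSum_eq (hs : IsMaxOddMult ε p s)
    (ha : ∀ j, j < a ↔ s - 1 < p.part j) (hb : ∀ j, j < b ↔ s - 2 < p.part j)
    {μ : NPartition N} (hμ : EvenMult ε μ) (hdom : Dominates p μ) {k : ℕ} (hak : a ≤ k)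
    (hkb : k ≤ b) (heq : μ.partialSum k = p.partialSum k) : s - 1 ≤ μ.part k := by
  by_contra hlt
  have ha0 := hs.pos_of_forall_lt_iff ha
  have hprev : s - 1 ≤ μ.part (k - 1) := by
    have h1 := hdom.partialSum_le (k - 1)
    have h2 := p.partialSum_succ (k - 1)
    have h3 := μ.partialSum_succ (k - 1)
    rw [Nat.sub_add_cancel (by omega)] at h2 h3
    have := (hb (k - 1)).1 (by omega)
    omega
  have hk : ∀ j, j < k ↔ s - 2 < μ.part j := fun j => by
    constructor
    · intro hj
      have := μ.antitone (show j ≤ k - 1 by omega)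
      omega
    · intro hj
      by_contra hkj
      have := μ.antitone (not_lt.1 hkj)
      omega
  have := hμ.partialSum_add_mul_mod_two hk
  have := hs.partialSum_add_mul_mod_two_of_le ha hb hak hkb
  omega

lemma partialSum_lt (hs : IsMaxOddMult ε p s) (hs2 : 2 ≤ s)
    (ha : ∀ j, j < a ↔ s - 1 < p.part j) (hb : ∀ j, j < b ↔ s - 2 < p.part j)
    {μ : NPartition N} (hμ : EvenMult ε μ) (hdom : Dominates p μ) {k : ℕ} (hak : a ≤ k)
    (hkb : k ≤ b) : μ.partialSum k < p.partialSum k := by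
  refine lt_of_le_of_ne (hdom.partialSum_le k) fun heq => ?_
  -- through the window the parts of `p` are `s - 1`, so the equality propagates up to `b`
  have hprop : ∀ m, k ≤ m → m ≤ b → μ.partialSum m = p.partialSum m := by
    intro m hkm
    induction m, hkm using Nat.le_induction with
    | base => exact fun _ => heq
    | succ m hkm ih =>
      intro hmb
      have h1 := ih (by omega)
      have h2 := hs.le_part_of_partialSum_eq ha hb hμ hdom (by omega) (by omega) h1
      have h3 := (ha m).not.1 (by omega)
      have h4 := hdom.partialSum_le (m + 1)
      rw [partialSum_succ, partialSum_succ] at h4 ⊢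
      omega
  have h1 := hprop b hkb le_rfl
  have h2 := hs.le_part_of_partialSum_eq ha hb hμ hdom (hak.trans hkb) le_rfl h1
  have h3 := (hb b).not.1 (lt_irrefl b)
  have h4 := hdom.partialSum_le (b + 1)
  rw [partialSum_succ, partialSum_succ] at h4
  omega

end IsMaxOddMult

def moveBox (p : NPartition N) {i j : ℕ} (hij : i < j) (hi : p.part (i + 1) < p.part i)
    (hj : p.part j < p.part (j - 1)) (hgap : p.part j + 2 ≤ p.part i) : NPartition N where
  part k := p.part k + (if k = j then 1 else 0) - (if k = i then 1 else 0)
  antitone := antitone_nat_of_succ_le fun k => by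
    have := p.antitone (Nat.le_add_right k 1)
    have hk_i : k = i → p.part (k + 1) < p.part k := by rintro rfl; exact hi
    have hk_j : k + 1 = j → p.part (k + 1) < p.part k := by rintro rfl; exact hj
    have hk_ij : k = i → k + 1 = j → p.part (k + 1) + 2 ≤ p.part k := by
      rintro rfl rfl; exact hgap
    split_ifs <;> omega
  bound := p.bound + 1
  bound_zero := fun k hk => by
    have hj' := p.lt_bound_of_pos (i := j - 1) (by omega)
    rw [if_neg (by omega), if_neg (by omega), p.bound_zero k (by omega)]
  sum_parts := by
    have hi' := p.lt_bound_of_pos (i := i) (by omega)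
    have hj' := p.lt_bound_of_pos (i := j - 1) (by omega)
    have h := sum_range_add_ite_eq (x := 1) (y := 1) (fun k => show
      p.part k + (if k = j then 1 else 0) - (if k = i then 1 else 0) + (if k = i then 1 else 0) =
        p.part k + (if k = j then 1 else 0) by split_ifs <;> subst_vars <;> omega) (p.bound + 1)
    have hN : ∑ k ∈ range (p.bound + 1), p.part k = N :=
      p.partialSum_eq_of_forall_le fun k hk => p.bound_zero k (by omega)
    rw [if_pos (by omega), if_pos (by omega), hN] at h
    exact add_right_cancel h

section moveBox

variable (p : NPartition N) {i j : ℕ} (hij : i < j) (hi : p.part (i + 1) < p.part i)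
  (hj : p.part j < p.part (j - 1)) (hgap : p.part j + 2 ≤ p.part i)

lemma moveBox_part (k : ℕ) : (p.moveBox hij hi hj hgap).part k =
    p.part k + (if k = j then 1 else 0) - (if k = i then 1 else 0) :=
  rfl

lemma partialSum_moveBox (K : ℕ) :
    (p.moveBox hij hi hj hgap).partialSum K + (if i < K then 1 else 0) =
      p.partialSum K + (if j < K then 1 else 0) :=
  sum_range_add_ite_eq (fun k => by rw [moveBox_part]; split_ifs <;> subst_vars <;> omega) K

lemma sqSum_moveBox_lt : (p.moveBox hij hi hj hgap).sqSum < p.sqSum := by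
  have hi' := p.lt_bound_of_pos (i := i) (by omega)
  have hj' := p.lt_bound_of_pos (i := j - 1) (by omega)
  have hsq : ∀ k, (p.moveBox hij hi hj hgap).part k ^ 2 + (if k = i then 2 * p.part i - 1 else 0)
      = p.part k ^ 2 + (if k = j then 2 * p.part j + 1 else 0) := fun k => by
    rw [moveBox_part]
    rcases eq_or_ne k i with rfl | hki
    · obtain ⟨m, hm⟩ : ∃ m, p.part k = m + 1 := ⟨p.part k - 1, by omega⟩
      rw [if_neg hij.ne, if_pos rfl, if_pos rfl, if_neg hij.ne, hm, Nat.add_zero,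
        Nat.add_sub_cancel, show 2 * (m + 1) - 1 = 2 * m + 1 by omega]
      ring
    · rcases eq_or_ne k j with rfl | hkj
      · simp only [if_pos, if_neg hki, Nat.sub_zero, Nat.add_zero]
        ring
      · simp only [if_neg hki, if_neg hkj, Nat.add_zero, Nat.sub_zero]
  have h := sum_range_add_ite_eq hsq (p.bound + 1)
  have hsq_p : ∑ k ∈ range (p.bound + 1), p.part k ^ 2 = p.sqSum :=
    sum_range_eq_of_forall_le (Nat.le_add_right _ 1) fun k hk => by
      rw [p.bound_zero k hk, zero_pow two_ne_zero]
  rw [if_pos (by omega), if_pos (by omega), hsq_p] at h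
  change (p.moveBox hij hi hj hgap).sqSum + _ = _ at h
  omega

end moveBox

lemma exists_dominated_sqSum_lt {ε : ℕ} {p : NPartition N} (hp : ¬ EvenMult ε p)
    (hne : ∃ r : NPartition N, EvenMult ε r) :
    ∃ p' : NPartition N, p'.sqSum < p.sqSum ∧ Dominates p p' ∧
      ∀ μ, EvenMult ε μ → Dominates p μ → Dominates p' μ := by
  obtain ⟨s, hs⟩ := exists_isMaxOddMult hp
  have hs2 := hs.two_le hne
  obtain ⟨a, ha⟩ := p.exists_forall_lt_iff (s - 1)
  obtain ⟨b, hb⟩ := p.exists_forall_lt_iff (s - 2)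
  have ha0 := hs.pos_of_forall_lt_iff ha
  have hpa := (ha (a - 1)).1 (by omega)
  have hpa' := (ha a).not.1 (lt_irrefl a)
  have hab : a ≤ b := by
    have := (hb (a - 1)).2 (by omega)
    omega
  have hpb := (hb b).not.1 (lt_irrefl b)
  have hpb' := (hb (b - 1)).1 (by omega)
  have hi : p.part (a - 1 + 1) < p.part (a - 1) := by
    rw [Nat.sub_add_cancel ha0]
    omega
  have hij : a - 1 < b := by omega
  have hj : p.part b < p.part (b - 1) := by omega
  have hgap : p.part b + 2 ≤ p.part (a - 1) := by omega
  refine ⟨p.moveBox hij hi hj hgap, p.sqSum_moveBox_lt hij hi hj hgap,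
    dominates_iff.2 fun k => ?_, fun μ hμ hdom => dominates_iff.2 fun k => ?_⟩
  · have := p.partialSum_moveBox hij hi hj hgap k
    split_ifs at this <;> omega
  · have h1 := p.partialSum_moveBox hij hi hj hgap k
    have h2 := hdom.partialSum_le k
    by_cases hk : a ≤ k ∧ k ≤ b
    · have := hs.partialSum_lt hs2 ha hb hμ hdom hk.1 hk.2
      split_ifs at h1 <;> omega
    · split_ifs at h1 <;> omega

lemma exists_isCollapse {ε : ℕ} (hne : ∃ r : NPartition N, EvenMult ε r) (p : NPartition N) :
    ∃ q, IsCollapse ε p q := by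
  induction hn : p.sqSum using Nat.strong_induction_on generalizing p with
  | _ n ih =>
    by_cases hp : EvenMult ε p
    · exact ⟨p, hp, fun _ => le_rfl, fun _ _ h => h⟩
    obtain ⟨p', hlt, hdom, hmax⟩ := exists_dominated_sqSum_lt hp hne
    obtain ⟨q, hq, hdq, hqmax⟩ := ih _ (hn ▸ hlt) p' rfl
    exact ⟨q, hq, fun k => (hdq k).trans (hdom k), fun r hr hdr => hqmax r hr (hmax r hr hdr)⟩

lemma Dominates.part_eq {p q : NPartition N} (hpq : Dominates p q) (hqp : Dominates q p) :
    p.part = q.part := by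
  funext i
  have h1 := hpq.partialSum_le i
  have h2 := hqp.partialSum_le i
  have h3 := hpq.partialSum_le (i + 1)
  have h4 := hqp.partialSum_le (i + 1)
  rw [partialSum_succ, partialSum_succ] at h3 h4
  omega

lemma IsCollapse.part_eq {ε : ℕ} {p q q' : NPartition N} (hq : IsCollapse ε p q)
    (hq' : IsCollapse ε p q') : q.part = q'.part :=
  Dominates.part_eq (hq.2.2 q' hq'.1 hq'.2.1) (hq'.2.2 q hq.1 hq.2.1)

end NPartition

theorem collapse_existsUnique_general (N ε : ℕ) (p : NPartition N)
    (hne : ∃ r : NPartition N, NPartition.EvenMult ε r) :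
    (∃ q : NPartition N, NPartition.IsCollapse ε p q) ∧
    (∀ q q' : NPartition N, NPartition.IsCollapse ε p q →
      NPartition.IsCollapse ε p q' → q.part = q'.part) :=
  ⟨NPartition.exists_isCollapse hne p, fun _ _ => NPartition.IsCollapse.part_eq⟩

/-- existence and uniqueness of the `ε`-collapse: there is a unique
(up to its part function) partition `q ⪯ p` with all parts `≡ ε (mod 2)` of even
multiplicity, dominating every such partition dominated by `p`. -/
theorem collapse_existsUnique (N ε : ℕ) (hε : ε ≤ 1) (p : NPartition N)
    (hne : ∃ r : NPartition N, NPartition.EvenMult ε r) :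
    (∃ q : NPartition N, NPartition.IsCollapse ε p q) ∧
    (∀ q q' : NPartition N, NPartition.IsCollapse ε p q →
      NPartition.IsCollapse ε p q' → q.part = q'.part) :=
  collapse_existsUnique_general N ε p hne
end

section
/- The map d(λ) = λ* (transpose) restricts to an order-reversing bijection from the set of special type-B partitions P^{sp}_B(2n+1) = P_{0,1}(2n+1) to itself. -/
/-- A partition of `N`: a weakly decreasing function `ℕ → ℕ` (0-indexed parts,
eventually zero) whose sum is `N`. -/
structure SpPartition (N : ℕ) where
  part : ℕ → ℕ
  antitone : ∀ ⦃i j : ℕ⦄, i ≤ j → part j ≤ part i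
  bound : ℕ
  bound_zero : ∀ i, bound ≤ i → part i = 0
  sum_parts : ∑ i ∈ Finset.range bound, part i = N

namespace SpPartition

variable {M N : ℕ}

/-- Multiplicity of the part `s` in `p` (intended for `s ≥ 1`). -/
def mult (p : SpPartition N) (s : ℕ) : ℕ :=
  ((Finset.range p.bound).filter (fun j => p.part j = s)).card

/-- Height `h_p(s) = #{j : p_j ≥ s}`, with the convention that `height p 0`
is the number of (positive) parts of `p`. -/
def height (p : SpPartition N) (s : ℕ) : ℕ :=
  ((Finset.range p.bound).filter (fun j => max s 1 ≤ p.part j)).card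

/-- `Dominates lam mu` means `mu ⪯ lam` in the dominance order. -/
def Dominates (lam mu : SpPartition N) : Prop :=
  ∀ k : ℕ, ∑ i ∈ Finset.range k, mu.part i ≤ ∑ i ∈ Finset.range k, lam.part i

/-- The transpose (conjugate) part function: `(p*)_i = #{j : p_j ≥ i+1}` (0-indexed). -/
def transposeFun (p : SpPartition N) : ℕ → ℕ :=
  fun i => ((Finset.range p.bound).filter (fun j => i + 1 ≤ p.part j)).card

/-- Every (positive) part congruent to `ε` mod 2 has even multiplicity. -/
def EvenMult (ε : ℕ) (p : SpPartition N) : Prop :=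
  ∀ s, 1 ≤ s → s % 2 = ε % 2 → mult p s % 2 = 0

/-- Membership in `P_{ε,ε'}(N)`: parts `≡ ε (mod 2)` have even multiplicity and
height `≡ ε' (mod 2)`, including the convention at `s = 0` (whose height is the
number of parts) when `ε = 0`. -/
def SpecialCond (ε ε' : ℕ) (p : SpPartition N) : Prop :=
  EvenMult ε p ∧
  (∀ s, 1 ≤ s → mult p s ≠ 0 → s % 2 = ε % 2 → height p s % 2 = ε' % 2) ∧
  (ε = 0 → height p 0 % 2 = ε' % 2)

/-- `q` is the `ε`-collapse of `p`: the dominance-greatest partition dominated by `p`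
all of whose parts `≡ ε (mod 2)` have even multiplicity. -/
def IsCollapse (ε : ℕ) (p q : SpPartition N) : Prop :=
  EvenMult ε q ∧ Dominates p q ∧
    ∀ r : SpPartition N, EvenMult ε r → Dominates p r → Dominates q r

/-- `q = p⁻`: decrease the smallest (positive) part of `p` by one. -/
def IsMinus (p : SpPartition M) (q : SpPartition N) : Prop :=
  (∀ i, i + 1 ≠ height p 0 → q.part i = p.part i) ∧
  q.part (height p 0 - 1) = p.part (height p 0 - 1) - 1

/-- `q = p⁺`: increase the largest part of `p` by one. -/
def IsPlus (p : SpPartition M) (q : SpPartition N) : Prop :=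
  q.part 0 = p.part 0 + 1 ∧ ∀ i, 1 ≤ i → q.part i = p.part i

/-- `q = f_{BC}(p) = (p⁻)_C`. -/
def IsFBC (n : ℕ) (p : SpPartition (2*n+1)) (q : SpPartition (2*n)) : Prop :=
  ∃ pm : SpPartition (2*n), IsMinus p pm ∧ IsCollapse 1 pm q

/-- `q = f_{CB}(p) = (p⁺)_B`. -/
def IsFCB (n : ℕ) (p : SpPartition (2*n)) (q : SpPartition (2*n+1)) : Prop :=
  ∃ pp : SpPartition (2*n+1), IsPlus p pp ∧ IsCollapse 0 pp q

end SpPartition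


/-!
Write `b = λ*`. The multiplicity of the part `k+1` of `λ` is `b_k - b_{k+1}` and its height is
`b_k`, so `λ ∈ P_{0,1}` says exactly: `b_0` is odd, and at every drop `b_{k+1} < b_k` with `k` odd
both `b_k` and `b_{k+1}` are odd. This condition on `b` implies the same condition on `λ = b*`:
a drop of `λ` at an odd row `k` sits at a corner of the diagram, and the column through that corner
has length `k+1` (even), so an even `λ_k` or `λ_{k+1}` would produce a drop of `b` at an odd column
with an even value. Order reversal is the usual identity: the number of cells in the first `k`
columns is `min_m (m k + #cells below row m)`, the minimum being attained at `m = b_k`.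
-/

open Finset

lemma Nat.lt_card_filter_range_iff {P : ℕ → Prop} [DecidablePred P] {b : ℕ}
    (hP : ∀ ⦃k l⦄, l ≤ k → P k → P l) (hb : ∀ k, b ≤ k → ¬ P k) (i : ℕ) :
    i < ((range b).filter P).card ↔ P i := by
  constructor
  · intro hi
    by_contra hPi
    have hsub : (range b).filter P ⊆ range i := fun k hk => by
      rw [mem_filter] at hk
      exact mem_range.2 (lt_of_not_ge fun hik => hPi (hP hik hk.2))
    have := card_le_card hsub
    rw [card_range] at this
    omega
  · intro hPi
    have hib : i < b := lt_of_not_ge fun hbi => hb i hbi hPi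
    have hsub : range (i + 1) ⊆ (range b).filter P := fun k hk => by
      have hki : k ≤ i := Nat.lt_succ_iff.1 (mem_range.1 hk)
      exact mem_filter.2 ⟨mem_range.2 (by omega), hP hki hPi⟩
    simpa using card_le_card hsub

namespace SpPartition

variable {N : ℕ}

lemma lt_bound_of_lt_part (p : SpPartition N) {i j : ℕ} (h : i < p.part j) : j < p.bound := by
  by_contra hj
  have := p.bound_zero j (not_lt.1 hj)
  omega

lemma lt_transposeFun_iff (p : SpPartition N) {i j : ℕ} :
    i < transposeFun p j ↔ j < p.part i :=
  Nat.lt_card_filter_range_iff (fun _ _ hlk hk => lt_of_lt_of_le hk (p.antitone hlk))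
    (fun k hk => by simp [p.bound_zero k hk]) i

lemma transposeFun_transpose {p q : SpPartition N} (hq : q.part = transposeFun p) :
    transposeFun q = p.part :=
  funext fun i => eq_of_forall_lt_iff fun j => by
    rw [lt_transposeFun_iff, hq, lt_transposeFun_iff]

lemma transposeFun_antitone (p : SpPartition N) : Antitone (transposeFun p) :=
  fun _ _ hij => card_le_card fun _ hx => by
    simp only [mem_filter] at hx ⊢
    exact ⟨hx.1, by omega⟩

lemma transposeFun_part_le (p : SpPartition N) (k : ℕ) : transposeFun p (p.part k) ≤ k :=
  not_lt.1 fun h => lt_irrefl _ (p.lt_transposeFun_iff.1 h)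

lemma transposeFun_eq_succ_of_le_of_lt (p : SpPartition N) {j k : ℕ} (hj₁ : p.part (k + 1) ≤ j)
    (hj₂ : j < p.part k) : transposeFun p j = k + 1 :=
  le_antisymm (not_lt.1 fun h => absurd (p.lt_transposeFun_iff.1 h) (not_lt.2 hj₁))
    (p.lt_transposeFun_iff.2 hj₂)

lemma mult_succ (p : SpPartition N) (k : ℕ) :
    mult p (k + 1) = transposeFun p k - transposeFun p (k + 1) := by
  have hfilter : (range p.bound).filter (fun j => p.part j = k + 1)
      = Ico (transposeFun p (k + 1)) (transposeFun p k) := by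
    ext j
    have h₁ := p.lt_transposeFun_iff (i := j) (j := k)
    have h₂ := p.lt_transposeFun_iff (i := j) (j := k + 1)
    have hbound : k < p.part j → j < p.bound := p.lt_bound_of_lt_part
    simp only [mem_filter, mem_range, mem_Ico]
    omega
  rw [mult, hfilter, Nat.card_Ico]

lemma height_eq_transposeFun (p : SpPartition N) (s : ℕ) :
    height p s = transposeFun p (s - 1) := by
  unfold height transposeFun
  congr 1
  exact filter_congr fun _ _ => by omega

lemma sum_range_comp_part (p : SpPartition N) {M : ℕ} (hM : p.bound ≤ M) {f : ℕ → ℕ}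
    (hf : f 0 = 0) : ∑ j ∈ range M, f (p.part j) = ∑ j ∈ range p.bound, f (p.part j) :=
  (sum_subset (range_subset_range.2 hM) fun j _ hj => by
    rw [p.bound_zero j (not_lt.1 (mem_range.not.1 hj)), hf]).symm

lemma sum_range_part (p : SpPartition N) {M : ℕ} (hM : p.bound ≤ M) :
    ∑ j ∈ range M, p.part j = N :=
  (p.sum_range_comp_part hM (f := id) rfl).trans p.sum_parts

lemma sum_range_transposeFun (p : SpPartition N) {M : ℕ} (hM : p.bound ≤ M) (k : ℕ) :
    ∑ i ∈ range k, transposeFun p i = ∑ j ∈ range M, min (p.part j) k := by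
  rw [p.sum_range_comp_part hM (f := fun x => min x k) (Nat.zero_min k)]
  simp only [transposeFun, card_filter]
  rw [sum_comm]
  refine sum_congr rfl fun j _ => ?_
  rw [← card_filter, ← card_range (min (p.part j) k)]
  congr 1
  ext i
  simp only [mem_filter, mem_range]
  omega

lemma sum_transposeFun_add_sum_part_le (p : SpPartition N) (k m : ℕ) :
    ∑ i ∈ range k, transposeFun p i + ∑ j ∈ range m, p.part j ≤ N + m * k := by
  have hT := p.sum_range_transposeFun (le_max_right m p.bound) k
  have hN := p.sum_range_part (le_max_right m p.bound)
  rw [← sum_range_add_sum_Ico _ (le_max_left m p.bound)] at hT hN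
  have hhead : ∑ j ∈ range m, min (p.part j) k ≤ m * k := by
    simpa using sum_le_sum fun j (_ : j ∈ range m) => min_le_right (p.part j) k
  have htail : ∑ j ∈ Ico m (max m p.bound), min (p.part j) k
      ≤ ∑ j ∈ Ico m (max m p.bound), p.part j :=
    sum_le_sum fun j _ => min_le_left _ _
  omega

lemma sum_transposeFun_add_sum_part_eq (p : SpPartition N) (k : ℕ) :
    ∑ i ∈ range k, transposeFun p i + ∑ j ∈ range (transposeFun p k), p.part j
      = N + transposeFun p k * k := by
  set h := transposeFun p k
  have hT := p.sum_range_transposeFun (le_max_right h p.bound) k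
  have hN := p.sum_range_part (le_max_right h p.bound)
  rw [← sum_range_add_sum_Ico _ (le_max_left h p.bound)] at hT hN
  have hhead : ∑ j ∈ range h, min (p.part j) k = h * k := by
    rw [sum_congr rfl fun j hj => min_eq_right (p.lt_transposeFun_iff.1 (mem_range.1 hj)).le,
      sum_const, card_range, smul_eq_mul]
  have htail : ∑ j ∈ Ico h (max h p.bound), min (p.part j) k
      = ∑ j ∈ Ico h (max h p.bound), p.part j :=
    sum_congr rfl fun j hj =>
      min_eq_left (not_lt.1 fun hk => (mem_Ico.1 hj).1.not_gt (p.lt_transposeFun_iff.2 hk))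
  omega

lemma Dominates.transpose {lam mu qlam qmu : SpPartition N} (hlam : qlam.part = transposeFun lam)
    (hmu : qmu.part = transposeFun mu) (h : Dominates lam mu) : Dominates qmu qlam := by
  intro k
  rw [hlam, hmu]
  have hle := lam.sum_transposeFun_add_sum_part_le k (transposeFun mu k)
  have heq := mu.sum_transposeFun_add_sum_part_eq k
  have hdom := h (transposeFun mu k)
  omega

def SpecialProfile (b : ℕ → ℕ) : Prop :=
  b 0 % 2 = 1 ∧ ∀ k, k % 2 = 1 → b (k + 1) < b k → b k % 2 = 1 ∧ b (k + 1) % 2 = 1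

lemma specialCond_zero_one_iff (p : SpPartition N) :
    SpecialCond 0 1 p ↔ SpecialProfile (transposeFun p) := by
  simp only [SpecialCond, EvenMult, SpecialProfile, height_eq_transposeFun, Nat.zero_sub,
    Nat.zero_mod, Nat.one_mod, true_implies]
  constructor
  · rintro ⟨hmult, hheight, hzero⟩
    refine ⟨hzero, fun k hk hdrop => ?_⟩
    have h₁ := hmult (k + 1) (by omega) (by omega)
    have h₂ := hheight (k + 1) (by omega) (by rw [mult_succ]; omega) (by omega)
    rw [mult_succ] at h₁
    rw [Nat.add_sub_cancel] at h₂
    omega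
  · rintro ⟨hzero, hdrop⟩
    have hstep : ∀ k, k % 2 = 1 →
        (transposeFun p k - transposeFun p (k + 1)) % 2 = 0 ∧
        (transposeFun p k - transposeFun p (k + 1) ≠ 0 → transposeFun p k % 2 = 1) := by
      intro k hk
      have hle : transposeFun p (k + 1) ≤ transposeFun p k := p.transposeFun_antitone (Nat.le_succ k)
      rcases hle.lt_or_eq with hlt | heq
      · have := hdrop k hk hlt
        omega
      · omega
    refine ⟨fun s hs hpar => ?_, fun s hs hne hpar => ?_, hzero⟩ <;>
      obtain ⟨k, rfl⟩ : ∃ k, s = k + 1 := ⟨s - 1, by omega⟩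
    · rw [mult_succ]
      exact (hstep k (by omega)).1
    · rw [mult_succ] at hne
      exact (hstep k (by omega)).2 hne

lemma specialProfile_part (p : SpPartition N) (h : SpecialProfile (transposeFun p)) :
    SpecialProfile p.part := by
  obtain ⟨hzero, hdrop⟩ := h
  have hpos : 0 < p.part 0 := p.lt_transposeFun_iff.1 (by omega)
  refine ⟨?_, fun k hk hlt => ⟨?_, ?_⟩⟩
  · by_contra heven
    obtain ⟨j, hj⟩ : ∃ j, p.part 0 = j + 1 := ⟨p.part 0 - 1, by omega⟩
    have hlast : transposeFun p (j + 1) = 0 := hj ▸ Nat.le_zero.1 (p.transposeFun_part_le 0)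
    have hcol := hdrop j (by omega) (by rw [hlast]; exact p.lt_transposeFun_iff.2 (by omega))
    omega
  · by_contra heven
    obtain ⟨j, hj⟩ : ∃ j, p.part k = j + 1 := ⟨p.part k - 1, by omega⟩
    have hcorner : transposeFun p j = k + 1 :=
      p.transposeFun_eq_succ_of_le_of_lt (by omega) (by omega)
    have hnext : transposeFun p (j + 1) ≤ k := hj ▸ p.transposeFun_part_le k
    have hcol := hdrop j (by omega) (by omega)
    omega
  · by_contra heven
    rcases Nat.eq_zero_or_pos (p.part (k + 1)) with hzero' | hpos'
    · have hfirst : transposeFun p 0 = k + 1 :=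
        p.transposeFun_eq_succ_of_le_of_lt (by omega) (by omega)
      omega
    · obtain ⟨j, hj⟩ : ∃ j, p.part (k + 1) = j + 1 := ⟨p.part (k + 1) - 1, by omega⟩
      have hcorner : transposeFun p (j + 1) = k + 1 :=
        p.transposeFun_eq_succ_of_le_of_lt (by omega) (by omega)
      have hprev : k + 1 < transposeFun p j := p.lt_transposeFun_iff.2 (by omega)
      have hcol := hdrop j (by omega) (by omega)
      omega

end SpPartition

/-- the transpose restricts to an order-reversing bijection (an involution)
of `P^{sp}_B(2n+1) = P_{0,1}(2n+1)`. -/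
theorem transpose_specialB (n : ℕ) :
    (∀ p q : SpPartition (2 * n + 1), q.part = SpPartition.transposeFun p →
      SpPartition.SpecialCond 0 1 p → SpPartition.SpecialCond 0 1 q) ∧
    (∀ p q : SpPartition (2 * n + 1), q.part = SpPartition.transposeFun p →
      SpPartition.transposeFun q = p.part) ∧
    (∀ lam mu qlam qmu : SpPartition (2 * n + 1),
      qlam.part = SpPartition.transposeFun lam →
      qmu.part = SpPartition.transposeFun mu →
      SpPartition.SpecialCond 0 1 lam → SpPartition.SpecialCond 0 1 mu →
      SpPartition.Dominates lam mu → SpPartition.Dominates qmu qlam) := by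
  refine ⟨fun p q hq hp => ?_, fun p q hq => SpPartition.transposeFun_transpose hq,
    fun lam mu qlam qmu hlam hmu _ _ h => h.transpose hlam hmu⟩
  rw [SpPartition.specialCond_zero_one_iff, SpPartition.transposeFun_transpose hq]
  exact p.specialProfile_part ((SpPartition.specialCond_zero_one_iff p).1 hp)
end

section
/- The transpose map d(λ) = λ* gives an order-reversing bijection between P^{sp}_D(2n) = P_{0,0}(2n) and P^{asp}_C(2n) = P_{1,1}(2n). -/
/-!
Conjugation is the involution characterised by `j < λ*_i ↔ i < λ_j`, and `λ*_{s-1}` is the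
height of the part `s` of `λ`, `λ*_{s-1} - λ*_s` its multiplicity. If `λ ∈ P_{ε,ε}`, a part
`s ≡ ε` of `λ` has even multiplicity and height `≡ ε`, so the number of parts exceeding it is
`≡ ε` as well. Now let `r ≢ ε` be a part of `λ*`, i.e. a jump `λ_r > λ_{r+1}`: its height in
`λ*` is `λ_r` and its multiplicity `λ_r - λ_{r+1}`. Were `λ_r ≡ ε`, its height `r` would be
`≢ ε`; were `λ_{r+1} ≡ ε`, the number `r` of parts exceeding it would be `≢ ε` (for
`λ_{r+1} = 0` this is the convention on the number of parts). Hence `λ* ∈ P_{ε',ε'}` with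
`ε' = 1 - ε`; the same argument with `r = 0` and `λ_0 = ∞` gives the convention on the number
`λ_1` of parts of `λ*`.

Dominance is reversed because `∑_{i<k} λ*_i = N - ∑_j (λ_j - k)₊` and
`∑_j (λ_j - k)₊ = max_m (∑_{j<m} λ_j - m k)`, the maximum being attained when `m` is the
number of parts exceeding `k`.
-/

/-- A partition of `N`: a weakly decreasing function `ℕ → ℕ` (0-indexed parts,
eventually zero) whose sum is `N`. -/
structure FunPartition (N : ℕ) where
  part : ℕ → ℕ
  antitone : ∀ ⦃i j : ℕ⦄, i ≤ j → part j ≤ part i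
  bound : ℕ
  bound_zero : ∀ i, bound ≤ i → part i = 0
  sum_parts : ∑ i ∈ Finset.range bound, part i = N

namespace FunPartition

variable {M N : ℕ}

/-- Multiplicity of the part `s` in `p` (intended for `s ≥ 1`). -/
def mult (p : FunPartition N) (s : ℕ) : ℕ :=
  ((Finset.range p.bound).filter (fun j => p.part j = s)).card

/-- Height `h_p(s) = #{j : p_j ≥ s}`, with the convention that `height p 0`
is the number of (positive) parts of `p`. -/
def height (p : FunPartition N) (s : ℕ) : ℕ :=
  ((Finset.range p.bound).filter (fun j => max s 1 ≤ p.part j)).card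

/-- `Dominates lam mu` means `mu ⪯ lam` in the dominance order. -/
def Dominates (lam mu : FunPartition N) : Prop :=
  ∀ k : ℕ, ∑ i ∈ Finset.range k, mu.part i ≤ ∑ i ∈ Finset.range k, lam.part i

/-- The transpose (conjugate) part function: `(p*)_i = #{j : p_j ≥ i+1}` (0-indexed). -/
def transposeFun (p : FunPartition N) : ℕ → ℕ :=
  fun i => ((Finset.range p.bound).filter (fun j => i + 1 ≤ p.part j)).card

/-- Every (positive) part congruent to `ε` mod 2 has even multiplicity. -/
def EvenMult (ε : ℕ) (p : FunPartition N) : Prop :=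
  ∀ s, 1 ≤ s → s % 2 = ε % 2 → mult p s % 2 = 0

/-- Membership in `P_{ε,ε'}(N)`: parts `≡ ε (mod 2)` have even multiplicity and
height `≡ ε' (mod 2)`, including the convention at `s = 0` (whose height is the
number of parts) when `ε = 0`. -/
def SpecialCond (ε ε' : ℕ) (p : FunPartition N) : Prop :=
  EvenMult ε p ∧
  (∀ s, 1 ≤ s → mult p s ≠ 0 → s % 2 = ε % 2 → height p s % 2 = ε' % 2) ∧
  (ε = 0 → height p 0 % 2 = ε' % 2)

/-- `q` is the `ε`-collapse of `p`: the dominance-greatest partition dominated by `p`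
all of whose parts `≡ ε (mod 2)` have even multiplicity. -/
def IsCollapse (ε : ℕ) (p q : FunPartition N) : Prop :=
  EvenMult ε q ∧ Dominates p q ∧
    ∀ r : FunPartition N, EvenMult ε r → Dominates p r → Dominates q r

/-- `q = p⁻`: decrease the smallest (positive) part of `p` by one. -/
def IsMinus (p : FunPartition M) (q : FunPartition N) : Prop :=
  (∀ i, i + 1 ≠ height p 0 → q.part i = p.part i) ∧
  q.part (height p 0 - 1) = p.part (height p 0 - 1) - 1

/-- `q = p⁺`: increase the largest part of `p` by one. -/
def IsPlus (p : FunPartition M) (q : FunPartition N) : Prop :=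
  q.part 0 = p.part 0 + 1 ∧ ∀ i, 1 ≤ i → q.part i = p.part i

/-- `q = f_{BC}(p) = (p⁻)_C`. -/
def IsFBC (n : ℕ) (p : FunPartition (2*n+1)) (q : FunPartition (2*n)) : Prop :=
  ∃ pm : FunPartition (2*n), IsMinus p pm ∧ IsCollapse 1 pm q

/-- `q = f_{CB}(p) = (p⁺)_B`. -/
def IsFCB (n : ℕ) (p : FunPartition (2*n)) (q : FunPartition (2*n+1)) : Prop :=
  ∃ pp : FunPartition (2*n+1), IsPlus p pp ∧ IsCollapse 0 pp q

end FunPartition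

def IsConjugate (t a : ℕ → ℕ) : Prop :=
  ∀ i j, j < t i ↔ i < a j

namespace IsConjugate

variable {t a : ℕ → ℕ}

theorem symm (h : IsConjugate t a) : IsConjugate a t :=
  fun i j => (h j i).symm

theorem unique {b : ℕ → ℕ} (ha : IsConjugate t a) (hb : IsConjugate t b) : a = b := by
  funext j
  have hab : ∀ i, i < a j ↔ i < b j := fun i => (ha i j).symm.trans (hb i j)
  have h1 := hab (a j)
  have h2 := hab (b j)
  omega

theorem antitone (h : IsConjugate t a) : Antitone a := by
  intro i i' hii'
  by_contra hlt
  have hi' : i' < t (a i) := (h (a i) i').mpr (by omega)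
  exact lt_irrefl _ ((h (a i) i).mp (by omega))

end IsConjugate

/-- `SpecialCond ε ε` of the partition with conjugate `t`, stated in terms of `t`. -/
def ConjSpecialCond (ε : ℕ) (t : ℕ → ℕ) : Prop :=
  (∀ s, 1 ≤ s → s % 2 = ε % 2 →
      t (s - 1) % 2 = t s % 2 ∧ (t (s - 1) ≠ t s → t (s - 1) % 2 = ε % 2)) ∧
  (ε % 2 = 0 → t 0 % 2 = 0)

namespace ConjSpecialCond

variable {ε ε' : ℕ} {t a : ℕ → ℕ}

theorem mod_two_eq (h : ConjSpecialCond ε t) {s : ℕ} (hs : s % 2 = ε % 2)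
    (hjump : s = 0 ∨ t (s - 1) ≠ t s) : t (s - 1) % 2 = ε % 2 ∧ t s % 2 = ε % 2 := by
  rcases Nat.eq_zero_or_pos s with rfl | hpos
  · have := h.2 (by omega)
    simp only [Nat.zero_sub]
    omega
  · obtain ⟨hpar, hheight⟩ := h.1 s hpos hs
    have := hheight (by omega)
    omega

theorem mod_two_ne_of_isConjugate (hta : IsConjugate t a) (h : ConjSpecialCond ε t) {i : ℕ}
    (hi : i % 2 = ε % 2) (hlt : a (i + 1) < a i) :
    a i % 2 ≠ ε % 2 ∧ a (i + 1) % 2 ≠ ε % 2 := by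
  have hcol : ∀ m, a (i + 1) ≤ m → m < a i → t m = i + 1 := fun m hm₁ hm₂ => by
    have := (hta m i).2 hm₂
    have := mt (hta m (i + 1)).1 (by omega)
    omega
  constructor
  · intro hv
    have hlast : t (a i - 1) = i + 1 := hcol _ (by omega) (by omega)
    have hnext : ¬ i < t (a i) := mt (hta (a i) i).1 (lt_irrefl _)
    have := (h.mod_two_eq hv (Or.inr (by omega))).1
    omega
  · intro hw
    have hlast : t (a (i + 1)) = i + 1 := hcol _ le_rfl hlt
    have hjump : a (i + 1) = 0 ∨ t (a (i + 1) - 1) ≠ t (a (i + 1)) := by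
      refine (Nat.eq_zero_or_pos (a (i + 1))).imp id fun hpos => ?_
      have := (hta (a (i + 1) - 1) (i + 1)).2 (by omega)
      omega
    have := (h.mod_two_eq hw hjump).2
    omega

theorem of_isConjugate (hta : IsConjugate t a) (hεε' : (ε + ε') % 2 = 1)
    (h : ConjSpecialCond ε t) : ConjSpecialCond ε' a := by
  refine ⟨fun s hs hsε' => ?_, fun hε' => ?_⟩
  · obtain ⟨i, rfl⟩ : ∃ i, s = i + 1 := ⟨s - 1, by omega⟩
    rw [Nat.add_sub_cancel]
    rcases (hta.antitone (Nat.le_succ i)).eq_or_lt with heq | hlt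
    · simp [heq]
    · have := h.mod_two_ne_of_isConjugate hta (by omega) hlt
      omega
  · by_contra hodd
    have hempty : ¬ 0 < t (a 0) := mt (hta (a 0) 0).1 (lt_irrefl _)
    have hjump : t (a 0 - 1) ≠ t (a 0) := by
      have := (hta (a 0 - 1) 0).2 (by omega)
      omega
    have := (h.mod_two_eq (s := a 0) (by omega) (Or.inr hjump)).2
    omega

end ConjSpecialCond

theorem Finset.eq_range_card_of_isLowerSet {S : Finset ℕ} (hS : IsLowerSet (S : Set ℕ)) :
    S = Finset.range S.card := by
  refine Finset.eq_of_subset_of_card_le (fun j hj => Finset.mem_range.2 ?_) (by simp)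
  have hsub : Finset.range (j + 1) ⊆ S := fun i hi =>
    hS (Finset.mem_range_succ_iff.1 hi) (Finset.mem_coe.2 hj)
  simpa using Finset.card_le_card hsub

namespace FunPartition

variable {N : ℕ}

theorem lt_bound_of_pos (p : FunPartition N) {j : ℕ} (h : 0 < p.part j) : j < p.bound := by
  by_contra hj
  exact h.ne' (p.bound_zero j (not_lt.1 hj))

theorem isConjugate_transposeFun (p : FunPartition N) : IsConjugate (transposeFun p) p.part := by
  intro i j
  set S := (Finset.range p.bound).filter (fun j => i + 1 ≤ p.part j)
  have hS : IsLowerSet (S : Set ℕ) := fun k l hlk hk => by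
    simp only [S, Finset.coe_filter, Finset.mem_range, Set.mem_ofPred_eq] at hk ⊢
    exact ⟨by omega, hk.2.trans (p.antitone hlk)⟩
  change j < S.card ↔ _
  rw [← Finset.mem_range, ← Finset.eq_range_card_of_isLowerSet hS]
  simp only [S, Finset.mem_filter, Finset.mem_range]
  exact ⟨fun h => h.2, fun h => ⟨p.lt_bound_of_pos (by omega), h⟩⟩

theorem transposeFun_transposeFun {p q : FunPartition N} (hq : q.part = transposeFun p) :
    transposeFun q = p.part := by
  have hqp : IsConjugate (transposeFun p) (transposeFun q) := hq ▸ (isConjugate_transposeFun q).symm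
  exact hqp.unique (isConjugate_transposeFun p)

theorem transposeFun_le_bound (p : FunPartition N) (i : ℕ) : transposeFun p i ≤ p.bound :=
  (Finset.card_filter_le _ _).trans_eq (Finset.card_range _)

theorem height_eq_transposeFun (p : FunPartition N) (s : ℕ) :
    height p s = transposeFun p (s - 1) := by
  unfold height transposeFun
  congr 1
  ext j
  simp only [Finset.mem_filter, Finset.mem_range]
  omega

theorem mult_eq_transposeFun_sub (p : FunPartition N) {s : ℕ} (hs : 1 ≤ s) :
    mult p s = transposeFun p (s - 1) - transposeFun p s := by
  have hsub : (Finset.range p.bound).filter (fun j => s + 1 ≤ p.part j)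
      ⊆ (Finset.range p.bound).filter (fun j => s - 1 + 1 ≤ p.part j) :=
    Finset.monotone_filter_right _ fun j hj => by omega
  unfold mult transposeFun
  rw [← Finset.card_sdiff_of_subset hsub]
  congr 1
  ext j
  simp only [Finset.mem_filter, Finset.mem_sdiff, Finset.mem_range]
  omega

theorem specialCond_iff_conjSpecialCond (p : FunPartition N) {ε : ℕ} (hε : ε ≤ 1) :
    SpecialCond ε ε p ↔ ConjSpecialCond ε (transposeFun p) := by
  have hmono : ∀ s, transposeFun p s ≤ transposeFun p (s - 1) := fun s =>
    (isConjugate_transposeFun p).symm.antitone (Nat.sub_le s 1)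
  unfold SpecialCond ConjSpecialCond EvenMult
  simp only [height_eq_transposeFun, Nat.zero_sub]
  constructor
  · rintro ⟨hmult, hheight, hzero⟩
    refine ⟨fun s hs hsε => ?_, fun hε0 => by have := hzero (by omega); omega⟩
    have heven := hmult s hs hsε
    rw [mult_eq_transposeFun_sub p hs] at heven
    have := hmono s
    refine ⟨by omega, fun hne => hheight s hs ?_ hsε⟩
    rw [mult_eq_transposeFun_sub p hs]
    omega
  · rintro ⟨hcol, hzero⟩
    refine ⟨fun s hs hsε => ?_, fun s hs hmult hsε => ?_,
      fun hε0 => by have := hzero (by omega); omega⟩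
    · have := hmono s
      rw [mult_eq_transposeFun_sub p hs]
      have := (hcol s hs hsε).1
      omega
    · refine (hcol s hs hsε).2 fun heq => hmult ?_
      rw [mult_eq_transposeFun_sub p hs, heq, Nat.sub_self]

theorem specialCond_of_transposeFun {p q : FunPartition N} (hq : q.part = transposeFun p)
    {ε ε' : ℕ} (hε : ε ≤ 1) (hε' : ε' ≤ 1) (hεε' : (ε + ε') % 2 = 1)
    (hp : SpecialCond ε ε p) : SpecialCond ε' ε' q := by
  rw [specialCond_iff_conjSpecialCond q hε', transposeFun_transposeFun hq]
  exact ((specialCond_iff_conjSpecialCond p hε).1 hp).of_isConjugate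
    (isConjugate_transposeFun p) hεε'

theorem sum_range_part_of_bound_le (p : FunPartition N) {B : ℕ} (hB : p.bound ≤ B) :
    ∑ j ∈ Finset.range B, p.part j = N := by
  refine (Finset.sum_subset (Finset.range_subset_range.2 hB) fun j _ hj => ?_).symm.trans
    p.sum_parts
  exact p.bound_zero j (not_lt.1 (mt Finset.mem_range.2 hj))

theorem sum_range_min_add_sum_range_tsub (p : FunPartition N) (k : ℕ) {B : ℕ}
    (hB : p.bound ≤ B) :
    ∑ j ∈ Finset.range B, min (p.part j) k + ∑ j ∈ Finset.range B, (p.part j - k) = N := by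
  rw [← Finset.sum_add_distrib]
  exact (Finset.sum_congr rfl fun j _ => by omega).trans (sum_range_part_of_bound_le p hB)

theorem sum_range_transposeFun (p : FunPartition N) (k : ℕ) {B : ℕ} (hB : p.bound ≤ B) :
    ∑ i ∈ Finset.range k, transposeFun p i = ∑ j ∈ Finset.range B, min (p.part j) k := by
  have hrow : ∀ m, ∑ i ∈ Finset.range k, (if i + 1 ≤ m then 1 else 0) = min m k := by
    intro m
    induction k with
    | zero => simp
    | succ k ih =>
      rw [Finset.sum_range_succ, ih]
      split <;> omega
  calc ∑ i ∈ Finset.range k, transposeFun p i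
      = ∑ j ∈ Finset.range p.bound, ∑ i ∈ Finset.range k, (if i + 1 ≤ p.part j then 1 else 0) := by
        simp only [transposeFun, Finset.card_filter]
        exact Finset.sum_comm
    _ = ∑ j ∈ Finset.range B, min (p.part j) k := by
        simp only [hrow]
        refine Finset.sum_subset (Finset.range_subset_range.2 hB) fun j _ hj => ?_
        simp [p.bound_zero j (not_lt.1 (mt Finset.mem_range.2 hj))]

theorem sum_range_le_sum_tsub_add (f : ℕ → ℕ) (k : ℕ) {m B : ℕ} (hmB : m ≤ B) :
    ∑ j ∈ Finset.range m, f j ≤ ∑ j ∈ Finset.range B, (f j - k) + m * k :=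
  calc ∑ j ∈ Finset.range m, f j
      ≤ ∑ j ∈ Finset.range m, (f j - k + k) := Finset.sum_le_sum fun j _ => by omega
    _ = ∑ j ∈ Finset.range m, (f j - k) + m * k := by simp [Finset.sum_add_distrib]
    _ ≤ ∑ j ∈ Finset.range B, (f j - k) + m * k := by gcongr

/-- Equality case of `sum_range_le_sum_tsub_add`: the first `transposeFun p k` parts are
exactly those exceeding `k`. -/
theorem sum_tsub_add_eq_sum_range_transposeFun (p : FunPartition N) (k : ℕ) {B : ℕ}
    (hB : p.bound ≤ B) :
    ∑ j ∈ Finset.range B, (p.part j - k) + transposeFun p k * k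
      = ∑ j ∈ Finset.range (transposeFun p k), p.part j := by
  have hconj := isConjugate_transposeFun p
  have hmB : transposeFun p k ≤ B := (transposeFun_le_bound p k).trans hB
  have htail : ∑ j ∈ Finset.range B, (p.part j - k)
      = ∑ j ∈ Finset.range (transposeFun p k), (p.part j - k) := by
    refine (Finset.sum_subset (Finset.range_subset_range.2 hmB) fun j _ hj => ?_).symm
    have := mt (hconj k j).2 (mt Finset.mem_range.2 hj)
    omega
  calc ∑ j ∈ Finset.range B, (p.part j - k) + transposeFun p k * k
      = ∑ j ∈ Finset.range (transposeFun p k), (p.part j - k + k) := by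
        simp [htail, Finset.sum_add_distrib]
    _ = ∑ j ∈ Finset.range (transposeFun p k), p.part j :=
        Finset.sum_congr rfl fun j hj => by
          have := (hconj k j).1 (Finset.mem_range.1 hj)
          omega

theorem Dominates.transpose {lam mu qlam qmu : FunPartition N}
    (hlam : qlam.part = transposeFun lam) (hmu : qmu.part = transposeFun mu)
    (h : Dominates lam mu) : Dominates qmu qlam := by
  intro k
  set B := max lam.bound mu.bound
  have hlamB : lam.bound ≤ B := le_max_left _ _
  have hmuB : mu.bound ≤ B := le_max_right _ _
  rw [hlam, hmu, sum_range_transposeFun lam k hlamB, sum_range_transposeFun mu k hmuB]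
  have hmB : transposeFun mu k ≤ B := (transposeFun_le_bound mu k).trans hmuB
  have := sum_range_min_add_sum_range_tsub lam k hlamB
  have := sum_range_min_add_sum_range_tsub mu k hmuB
  have := sum_tsub_add_eq_sum_range_transposeFun mu k hmuB
  have := sum_range_le_sum_tsub_add lam.part k hmB
  have := h (transposeFun mu k)
  omega

end FunPartition

/-- the transpose gives an order-reversing bijection between
`P^{sp}_D(2n) = P_{0,0}(2n)` and `P^{asp}_C(2n) = P_{1,1}(2n)`. -/
theorem transpose_specialD_aspC (n : ℕ) :
    (∀ p q : FunPartition (2 * n), q.part = FunPartition.transposeFun p →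
      (FunPartition.SpecialCond 0 0 p → FunPartition.SpecialCond 1 1 q) ∧
      (FunPartition.SpecialCond 1 1 p → FunPartition.SpecialCond 0 0 q)) ∧
    (∀ p q : FunPartition (2 * n), q.part = FunPartition.transposeFun p →
      FunPartition.transposeFun q = p.part) ∧
    (∀ lam mu qlam qmu : FunPartition (2 * n),
      qlam.part = FunPartition.transposeFun lam →
      qmu.part = FunPartition.transposeFun mu →
      FunPartition.SpecialCond 0 0 lam → FunPartition.SpecialCond 0 0 mu →
      FunPartition.Dominates lam mu → FunPartition.Dominates qmu qlam) := by
  refine ⟨fun p q hq => ⟨?_, ?_⟩, fun p q hq => FunPartition.transposeFun_transposeFun hq,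
    fun lam mu qlam qmu hlam hmu _ _ h => h.transpose hlam hmu⟩
  · exact FunPartition.specialCond_of_transposeFun hq (by norm_num) (by norm_num) (by norm_num)
  · exact FunPartition.specialCond_of_transposeFun hq (by norm_num) (by norm_num) (by norm_num)
end

section
/- The map f_{BC}(λ) = (λ⁻)_C, where λ⁻ decreases the smallest part of λ by 1 and (·)_C denotes the type-C (ε = 1) collapse, maps P^{sp}_B(2n+1) bijectively onto P^{sp}_C(2n), and it preserves the dominance order. -/
/-!
The collapse is computed greedily. A partition `p` has all parts `≡ ε (mod 2)` of even
multiplicity iff `psum p k + (ε + 1) * k` is even at every corner `k` of its diagram. While some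
corner violates this, move one box from the first bad corner down to the first row that can
receive it: this lowers `psum` by one exactly on a window where that parity is odd, and every
admissible partition dominated by `μ` is already strictly below `μ` there. Hence the collapse `q`
of `μ` has `psum q k = psum μ k`, or `psum μ k - 1` when `psum μ k + (ε + 1) * k` is odd.

For special partitions the parity of `psum p k` is governed by the part `p (k - 1)`. Comparing
these parities shows that `p ∈ P^{sp}_B(2n+1)` and `q ∈ P^{sp}_C(2n)` with
`psum q ≤ psum p ≤ psum q + 1` determine each other, as `q = (p⁻)_C` and `p = (q⁺)_B`. Every
`f_{BC}(p)` is special and obeys these bounds, which gives injectivity, and `(q⁺)_B` is a special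
preimage of `q`. Order preservation holds since `p ↦ p⁻` and collapsing are both monotone.
-/

namespace SpPartition

open Finset

variable {M N ε n : ℕ}

def psum (p : SpPartition N) (k : ℕ) : ℕ := ∑ i ∈ range k, p.part i

theorem dominates_iff {lam mu : SpPartition N} :
    Dominates lam mu ↔ ∀ k, psum mu k ≤ psum lam k := Iff.rfl

theorem Dominates.trans {a b c : SpPartition N} (hab : Dominates a b) (hbc : Dominates b c) :
    Dominates a c :=
  fun k => (hbc k).trans (hab k)

@[simp] theorem psum_zero (p : SpPartition N) : psum p 0 = 0 := rfl

theorem psum_succ (p : SpPartition N) (k : ℕ) : psum p (k + 1) = psum p k + p.part k :=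
  sum_range_succ _ _

theorem psum_one (p : SpPartition N) : psum p 1 = p.part 0 := by
  simp [psum_succ]

theorem psum_of_pos (p : SpPartition N) {k : ℕ} (hk : 1 ≤ k) :
    psum p k = psum p (k - 1) + p.part (k - 1) := by
  obtain ⟨k, rfl⟩ := Nat.exists_eq_add_of_le' hk
  exact psum_succ p k

theorem psum_mono (p : SpPartition N) : Monotone (psum p) := fun _ _ h =>
  sum_le_sum_of_subset (range_subset_range.2 h)

theorem psum_add_of_part_eq (p : SpPartition N) {a d w : ℕ}
    (h : ∀ i, a ≤ i → i < a + d → p.part i = w) : psum p (a + d) = psum p a + w * d := by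
  induction d with
  | zero => simp
  | succ d ih =>
    rw [← add_assoc, psum_succ, ih fun i h₁ h₂ => h i h₁ (by omega),
      h (a + d) (by omega) (by omega)]
    ring

theorem psum_eq_of_part_eq_zero (p : SpPartition N) {k l : ℕ} (hkl : k ≤ l)
    (hz : ∀ i, k ≤ i → p.part i = 0) : psum p l = psum p k := by
  obtain ⟨d, rfl⟩ := Nat.exists_eq_add_of_le hkl
  simpa using psum_add_of_part_eq p (fun i hi _ => hz i hi)

theorem psum_of_bound_le (p : SpPartition N) {k : ℕ} (h : p.bound ≤ k) : psum p k = N := by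
  rw [psum_eq_of_part_eq_zero p h fun i hi => p.bound_zero i hi]
  exact p.sum_parts

theorem psum_le (p : SpPartition N) (k : ℕ) : psum p k ≤ N :=
  (psum_mono p (Nat.le_add_right k p.bound)).trans_eq (psum_of_bound_le p (by omega))

theorem part_eq_zero_of_le (p : SpPartition N) {i : ℕ} (h : N ≤ i) : p.part i = 0 := by
  by_contra hne
  have hpos : ∀ j ∈ range (i + 1), 1 ≤ p.part j := fun j hj =>
    (Nat.one_le_iff_ne_zero.2 hne).trans (p.antitone (Nat.lt_succ_iff.1 (mem_range.1 hj)))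
  have := (card_nsmul_le_sum _ _ _ hpos).trans (psum_le p (i + 1))
  simp at this
  omega

theorem psum_of_le (p : SpPartition N) {k : ℕ} (h : N ≤ k) : psum p k = N :=
  (psum_eq_of_part_eq_zero p (Nat.le_add_right k p.bound)
    fun _ hi => part_eq_zero_of_le p (by omega)).symm.trans (psum_of_bound_le p (by omega))

theorem psum_eq_of_forall_part_eq_zero (p : SpPartition N) {k : ℕ}
    (hz : ∀ i, k ≤ i → p.part i = 0) : psum p k = N :=
  (psum_eq_of_part_eq_zero p (Nat.le_add_right k N) hz).symm.trans (psum_of_le p (by omega))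

theorem part_eq_of_psum_eq {p : SpPartition M} {q : SpPartition N}
    (h : ∀ k, psum p k = psum q k) : p.part = q.part := by
  funext i
  have := h (i + 1)
  rw [psum_succ, psum_succ, h i] at this
  omega

theorem lt_height_iff {p : SpPartition N} {s j : ℕ} : j < height p s ↔ max s 1 ≤ p.part j := by
  have hex : ∃ i, p.part i < max s 1 :=
    ⟨p.bound, by rw [p.bound_zero p.bound le_rfl]; omega⟩
  have hfind : ∀ i, i < Nat.find hex ↔ max s 1 ≤ p.part i := fun i =>
    ⟨fun h => le_of_not_gt (Nat.find_min hex h), fun h => by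
      by_contra hc
      exact absurd (h.trans (p.antitone (le_of_not_gt hc))) (not_le.2 (Nat.find_spec hex))⟩
  have hle : Nat.find hex ≤ p.bound := Nat.find_le (by rw [p.bound_zero p.bound le_rfl]; omega)
  have hfilter : (range p.bound).filter (fun j => max s 1 ≤ p.part j) = range (Nat.find hex) := by
    ext i
    simp only [mem_filter, mem_range, ← hfind]
    omega
  rw [height, hfilter, card_range, hfind]

theorem height_succ_add_mult (p : SpPartition N) {s : ℕ} (hs : 1 ≤ s) :
    height p (s + 1) + mult p s = height p s := by
  have hsub : (range p.bound).filter (fun j => max (s + 1) 1 ≤ p.part j)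
      ⊆ (range p.bound).filter (fun j => max s 1 ≤ p.part j) :=
    monotone_filter_right _ fun j hj => by omega
  have hmult : (range p.bound).filter (fun j => p.part j = s)
      = (range p.bound).filter (fun j => max s 1 ≤ p.part j)
        \ (range p.bound).filter (fun j => max (s + 1) 1 ≤ p.part j) := by
    ext x
    simp only [mem_filter, mem_sdiff, mem_range]
    omega
  rw [mult, hmult, card_sdiff_of_subset hsub, height, height]
  have := card_le_card hsub
  omega

theorem psum_height (p : SpPartition N) {s : ℕ} (hs : 1 ≤ s) :
    psum p (height p s) = psum p (height p (s + 1)) + s * mult p s := by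
  rw [← height_succ_add_mult p hs]
  refine psum_add_of_part_eq p fun i h₁ h₂ => ?_
  have hge := lt_height_iff.1 (height_succ_add_mult p hs ▸ h₂)
  have hlt : ¬ (max (s + 1) 1 ≤ p.part i) := fun h => by have := lt_height_iff.2 h; omega
  omega

theorem height_eq_of_part_succ_lt {p : SpPartition N} {k : ℕ} (hc : p.part (k + 1) < p.part k) :
    height p (p.part k) = k + 1 := by
  have h₁ : k < height p (p.part k) := lt_height_iff.2 (by omega)
  have h₂ : ¬ k + 1 < height p (p.part k) := fun h => by have := lt_height_iff.1 h; omega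
  omega

theorem mult_ne_zero_of_part_succ_lt {p : SpPartition N} {k : ℕ}
    (hc : p.part (k + 1) < p.part k) : mult p (p.part k) ≠ 0 := by
  have h := height_succ_add_mult p (s := p.part k) (by omega)
  have : ¬ k < height p (p.part k + 1) := fun h => by have := lt_height_iff.1 h; omega
  rw [height_eq_of_part_succ_lt hc] at h
  omega

theorem exists_part_succ_lt_of_mult_ne_zero {p : SpPartition N} {s : ℕ} (hs : 1 ≤ s)
    (hm : mult p s ≠ 0) : ∃ k, p.part (k + 1) < p.part k ∧ p.part k = s := by
  have h := height_succ_add_mult p hs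
  have h₁ : max s 1 ≤ p.part (height p s - 1) := lt_height_iff.1 (by omega)
  have h₂ : ¬ max (s + 1) 1 ≤ p.part (height p s - 1) := fun hc => by
    have := lt_height_iff.2 hc; omega
  have h₃ : ¬ max s 1 ≤ p.part (height p s) := fun hc => by have := lt_height_iff.2 hc; omega
  exact ⟨height p s - 1, by rw [Nat.sub_add_cancel (by omega)]; omega, by omega⟩

theorem psum_height_zero (p : SpPartition N) : psum p (height p 0) = N := by
  refine psum_eq_of_forall_part_eq_zero p fun i hi => ?_
  have : ¬ max 0 1 ≤ p.part i := fun h => by have := lt_height_iff.2 h; omega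
  omega

theorem psum_of_height_le {p : SpPartition N} {k : ℕ} (h : height p 0 ≤ k) : psum p k = N :=
  le_antisymm (psum_le p k) ((psum_height_zero p).symm.trans_le (psum_mono p h))

theorem height_zero_pos {p : SpPartition N} (hN : N ≠ 0) : 1 ≤ height p 0 := by
  by_contra h
  have := psum_of_height_le (p := p) (k := 0) (by omega)
  simp at this
  omega

theorem psum_lt_of_lt_height {p : SpPartition N} {k : ℕ} (h : k < height p 0) : psum p k < N := by
  have h₁ : 1 ≤ p.part k := by have := lt_height_iff.1 h; omega
  have := psum_mono p (Nat.succ_le_of_lt h)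
  rw [psum_succ, psum_height_zero] at this
  omega

theorem mul_mod_two_of_odd {a : ℕ} (h : a % 2 = 1) (b : ℕ) : a * b % 2 = b % 2 := by
  rw [Nat.mul_mod, h, one_mul, Nat.mod_mod]

theorem mul_mod_two_of_even {a : ℕ} (h : a % 2 = 0) (b : ℕ) : a * b % 2 = 0 := by
  rw [Nat.mul_mod, h, zero_mul, Nat.zero_mod]

theorem height_eq_zero_of_lt {p : SpPartition N} {s : ℕ} (h : N < s) : height p s = 0 := by
  by_contra hne
  have h₁ := lt_height_iff.1 (Nat.pos_of_ne_zero hne)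
  have h₂ := psum_le p 1
  rw [psum_one] at h₂
  omega

theorem part_lt_part_pred_height {p : SpPartition N} {s : ℕ} (h : 1 ≤ height p s) :
    p.part (height p s - 1 + 1) < p.part (height p s - 1) := by
  have h₁ := lt_height_iff.1 (Nat.sub_lt h one_pos)
  have h₂ : ¬ max s 1 ≤ p.part (height p s) := fun hc => by have := lt_height_iff.2 hc; omega
  rw [Nat.sub_add_cancel h]
  omega

theorem evenMult_iff_forall_height (ε : ℕ) (p : SpPartition N) :
    EvenMult ε p ↔ ∀ s, 1 ≤ s → (psum p (height p s) + (ε + 1) * height p s) % 2 = 0 := by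
  have hstep : ∀ s, 1 ≤ s → psum p (height p s) + (ε + 1) * height p s
      = psum p (height p (s + 1)) + (ε + 1) * height p (s + 1) + (s + ε + 1) * mult p s := by
    intro s hs
    rw [psum_height p hs, ← height_succ_add_mult p hs]
    ring
  constructor
  · intro hem
    suffices ∀ t s, 1 ≤ s → N < s + t →
        (psum p (height p s) + (ε + 1) * height p s) % 2 = 0 from
      fun s hs => this (N + 1) s hs (by omega)
    intro t
    induction t with
    | zero => intro s _ hs; simp [height_eq_zero_of_lt (p := p) (s := s) (by omega)]
    | succ t ih =>
      intro s hs hst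
      have hmul : (s + ε + 1) * mult p s % 2 = 0 := by
        rcases Nat.mod_two_eq_zero_or_one (s + ε + 1) with h | h
        · exact mul_mod_two_of_even h _
        · rw [mul_mod_two_of_odd h, hem s hs (by omega)]
      have := ih (s + 1) (by omega) (by omega)
      have := hstep s hs
      omega
  · intro hh s hs hε
    have h₁ := hh s hs
    have h₂ := hh (s + 1) (by omega)
    have h₃ := hstep s hs
    have := mul_mod_two_of_odd (a := s + ε + 1) (by omega) (mult p s)
    omega

/-- Modulo 2, `psum p k + (ε + 1) * k` counts the rows `i < k` with `p i ≡ ε`, so this says that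
every block of equal parts `≡ ε (mod 2)` has even length. -/
theorem evenMult_iff_corner (ε : ℕ) (p : SpPartition N) :
    EvenMult ε p ↔ ∀ k, p.part (k + 1) < p.part k →
      (psum p (k + 1) + (ε + 1) * (k + 1)) % 2 = 0 := by
  rw [evenMult_iff_forall_height]
  constructor
  · intro hh k hc
    simpa [height_eq_of_part_succ_lt hc] using hh (p.part k) (by omega)
  · intro hc s _
    rcases Nat.eq_zero_or_pos (height p s) with h | h
    · simp [h]
    · simpa [Nat.sub_add_cancel h] using hc _ (part_lt_part_pred_height h)

theorem exists_moveBox (μ : SpPartition N) {k j : ℕ} (hkj : k < j)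
    (hk : μ.part (k + 1) < μ.part k) (hj : μ.part j < μ.part (j - 1))
    (hkj₂ : μ.part j + 2 ≤ μ.part k) :
    ∃ ν : SpPartition N, ∀ m, psum ν m + (if k < m ∧ m ≤ j then 1 else 0) = psum μ m := by
  set f : ℕ → ℕ := fun i => if i = k then μ.part k - 1 else if i = j then μ.part j + 1 else μ.part i
  have hsum : ∀ m, ∑ i ∈ range m, f i + (if k < m ∧ m ≤ j then 1 else 0) = psum μ m := by
    intro m
    induction m with
    | zero => simp
    | succ m ih =>
      have hfm : f m = if m = k then μ.part k - 1 else if m = j then μ.part j + 1 else μ.part m :=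
        rfl
      rw [sum_range_succ, psum_succ, hfm]
      split_ifs at ih ⊢ <;> subst_vars <;> omega
  have hanti : Antitone f := antitone_nat_of_succ_le fun i => by
    have h₁ := μ.antitone (Nat.le_add_right i 1)
    have hj' : j = i + 1 → μ.part (i + 1) < μ.part i := by rintro rfl; simpa using hj
    simp only [f]
    split_ifs <;> subst_vars <;> omega
  refine ⟨⟨f, fun i j h => hanti h, max μ.bound (j + 1), fun i hi => ?_, ?_⟩, hsum⟩
  · simp only [f, if_neg (show i ≠ k by omega), if_neg (show i ≠ j by omega)]
    exact μ.bound_zero i (by omega)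
  · have := hsum (max μ.bound (j + 1))
    rw [if_neg (by omega), psum_of_bound_le μ (le_max_left _ _)] at this
    simpa using this

theorem part_mod_two_of_first_odd_corner {μ : SpPartition N} {k₀ : ℕ}
    (hc : μ.part (k₀ + 1) < μ.part k₀) (hodd : (psum μ (k₀ + 1) + (ε + 1) * (k₀ + 1)) % 2 = 1)
    (hmin : ∀ k < k₀, μ.part (k + 1) < μ.part k → (psum μ (k + 1) + (ε + 1) * (k + 1)) % 2 = 0) :
    μ.part k₀ % 2 = ε % 2 := by
  set v := μ.part k₀
  set a := height μ (v + 1)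
  have hak : a ≤ k₀ := not_lt.1 fun h => by have := lt_height_iff.1 h; omega
  have hblock : ∀ i, a ≤ i → i < k₀ + 1 → μ.part i = v := fun i h₁ h₂ => by
    have : ¬ max (v + 1) 1 ≤ μ.part i := fun h => by have := lt_height_iff.2 h; omega
    have := μ.antitone (Nat.lt_succ_iff.1 h₂)
    omega
  have hsplit := psum_add_of_part_eq μ (a := a) (d := k₀ + 1 - a)
    fun i h₁ h₂ => hblock i h₁ (by omega)
  rw [Nat.add_sub_cancel' (by omega)] at hsplit
  have ha : (psum μ a + (ε + 1) * a) % 2 = 0 := by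
    rcases Nat.eq_zero_or_pos a with h | h
    · simp [h]
    · simpa [Nat.sub_add_cancel h] using
        hmin (a - 1) (by omega) (part_lt_part_pred_height (p := μ) (s := v + 1) h)
  have hsum : psum μ (k₀ + 1) + (ε + 1) * (k₀ + 1)
      = psum μ a + (ε + 1) * a + (v + ε + 1) * (k₀ + 1 - a) := by
    rw [hsplit]
    zify [hak, Nat.le_succ_of_le hak]
    ring
  rcases Nat.mod_two_eq_zero_or_one (v + ε + 1) with h | h
  · have := mul_mod_two_of_even h (k₀ + 1 - a)
    omega
  · omega

theorem two_le_part_of_odd_corner (hNε : ε % 2 = 1 → N % 2 = 0) {μ : SpPartition N} {k₀ : ℕ}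
    (hc : μ.part (k₀ + 1) < μ.part k₀) (hodd : (psum μ (k₀ + 1) + (ε + 1) * (k₀ + 1)) % 2 = 1)
    (hpar : μ.part k₀ % 2 = ε % 2) : 2 ≤ μ.part k₀ := by
  by_contra hlt
  have hN := hNε (by omega)
  have hrest : psum μ (k₀ + 1) = N :=
    psum_eq_of_forall_part_eq_zero μ fun i hi => by have := μ.antitone hi; omega
  have := mul_mod_two_of_even (a := ε + 1) (by omega) (k₀ + 1)
  omega

/-- An admissible `r` meeting `μ` inside the window would have a corner there, where its parity
is even while that of `μ` is odd. -/
theorem psum_lt_of_evenMult {μ r : SpPartition N} (hr : EvenMult ε r) (hrμ : Dominates μ r)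
    {k₀ j₀ w : ℕ} (hk₀ : w ≤ μ.part k₀) (hmid : ∀ i, k₀ < i → i < j₀ → μ.part i = w)
    (hj₀ : μ.part j₀ < w) (hodd : ∀ m, k₀ < m → m ≤ j₀ → (psum μ m + (ε + 1) * m) % 2 = 1) :
    ∀ m, k₀ < m → m ≤ j₀ → psum r m < psum μ m := by
  rw [dominates_iff] at hrμ
  have hge : ∀ m, k₀ < m → m ≤ j₀ → psum r m = psum μ m → w ≤ r.part m := by
    intro m h₁ h₂ heq
    by_contra hlt
    have hμ : w ≤ μ.part (m - 1) := by
      rcases (Nat.le_sub_one_of_lt h₁).eq_or_lt with h | h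
      · rwa [← h]
      · exact (hmid (m - 1) h (by omega)).ge
    have hcorner : r.part (m - 1 + 1) < r.part (m - 1) := by
      have := hrμ (m - 1)
      rw [psum_of_pos r (by omega), psum_of_pos μ (by omega)] at heq
      rw [Nat.sub_add_cancel (by omega)]
      omega
    have := (evenMult_iff_corner ε r).1 hr _ hcorner
    rw [Nat.sub_add_cancel (by omega), heq] at this
    have := hodd m h₁ h₂
    omega
  suffices ∀ d m, m + d = j₀ → k₀ < m → psum r m < psum μ m from
    fun m h₁ h₂ => this (j₀ - m) m (by omega) h₁
  intro d
  induction d with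
  | zero =>
    intro m hm h₁
    refine lt_of_le_of_ne (hrμ m) fun heq => ?_
    have := hrμ (m + 1)
    rw [psum_succ, psum_succ] at this
    have := hge m h₁ (by omega) heq
    rw [Nat.add_zero] at hm
    subst hm
    omega
  | succ d ih =>
    intro m hm h₁
    refine lt_of_le_of_ne (hrμ m) fun heq => ?_
    have := ih (m + 1) (by omega) (by omega)
    rw [psum_succ, psum_succ] at this
    have := hge m h₁ (by omega) heq
    have := hmid m h₁ (by omega)
    omega

theorem exists_collapse_step (hNε : ε % 2 = 1 → N % 2 = 0) {μ : SpPartition N} {k₀ : ℕ}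
    (hc : μ.part (k₀ + 1) < μ.part k₀) (hodd : (psum μ (k₀ + 1) + (ε + 1) * (k₀ + 1)) % 2 = 1)
    (hmin : ∀ k < k₀, μ.part (k + 1) < μ.part k → (psum μ (k + 1) + (ε + 1) * (k + 1)) % 2 = 0) :
    ∃ j₀, k₀ < j₀ ∧ (∀ m, k₀ < m → m ≤ j₀ → (psum μ m + (ε + 1) * m) % 2 = 1) ∧
      (∀ r : SpPartition N, EvenMult ε r → Dominates μ r →
        ∀ m, k₀ < m → m ≤ j₀ → psum r m < psum μ m) ∧
      ∃ ν : SpPartition N, ∀ m, psum ν m + (if k₀ < m ∧ m ≤ j₀ then 1 else 0) = psum μ m := by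
  set v := μ.part k₀
  have hpar : v % 2 = ε % 2 := part_mod_two_of_first_odd_corner hc hodd hmin
  have hv : 2 ≤ v := two_le_part_of_odd_corner hNε hc hodd hpar
  have hex : ∃ j, k₀ < j ∧ μ.part j + 2 ≤ v :=
    ⟨k₀ + 1 + N, by omega, by rw [part_eq_zero_of_le μ (by omega)]; omega⟩
  obtain ⟨j₀, ⟨hkj, hj₀⟩, hjmin⟩ : ∃ j₀, (k₀ < j₀ ∧ μ.part j₀ + 2 ≤ v) ∧
      ∀ i < j₀, ¬ (k₀ < i ∧ μ.part i + 2 ≤ v) :=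
    ⟨Nat.find hex, Nat.find_spec hex, fun _ => Nat.find_min hex⟩
  have hmid : ∀ i, k₀ < i → i < j₀ → μ.part i = v - 1 := fun i h₁ h₂ => by
    have := hjmin i h₂
    have := μ.antitone (show k₀ + 1 ≤ i by omega)
    omega
  have hwin : ∀ m, k₀ < m → m ≤ j₀ → (psum μ m + (ε + 1) * m) % 2 = 1 := by
    intro m h₁ h₂
    obtain ⟨d, rfl⟩ := Nat.exists_eq_add_of_le (show k₀ + 1 ≤ m by omega)
    have hsplit := psum_add_of_part_eq μ (a := k₀ + 1) (d := d) (w := v - 1)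
      fun i h₁ h₂ => hmid i (by omega) (by omega)
    have hsum : psum μ (k₀ + 1 + d) + (ε + 1) * (k₀ + 1 + d)
        = psum μ (k₀ + 1) + (ε + 1) * (k₀ + 1) + (v - 1 + ε + 1) * d := by
      rw [hsplit]
      ring
    have := mul_mod_two_of_even (a := v - 1 + ε + 1) (by omega) d
    omega
  have hcocorner : μ.part j₀ < μ.part (j₀ - 1) := by
    rcases (Nat.le_sub_one_of_lt hkj).eq_or_lt with h | h
    · rw [← h]; omega
    · rw [hmid _ h (by omega)]; omega
  exact ⟨j₀, hkj, hwin, fun r hr hrμ => psum_lt_of_evenMult hr hrμ (w := v - 1) (by omega)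
    hmid (by omega) hwin, exists_moveBox μ hkj hc hcocorner (by omega)⟩

theorem IsCollapse.of_step {μ ν q : SpPartition N} {k₀ j₀ : ℕ}
    (hν : ∀ m, psum ν m + (if k₀ < m ∧ m ≤ j₀ then 1 else 0) = psum μ m)
    (hwin : ∀ m, k₀ < m → m ≤ j₀ → (psum μ m + (ε + 1) * m) % 2 = 1)
    (hlt : ∀ r : SpPartition N, EvenMult ε r → Dominates μ r →
      ∀ m, k₀ < m → m ≤ j₀ → psum r m < psum μ m)
    (hq : IsCollapse ε ν q) (hqcases : ∀ k, psum q k = psum ν k ∨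
      (psum q k + 1 = psum ν k ∧ (psum ν k + (ε + 1) * k) % 2 = 1)) :
    IsCollapse ε μ q ∧ ∀ k, psum q k = psum μ k ∨
      (psum q k + 1 = psum μ k ∧ (psum μ k + (ε + 1) * k) % 2 = 1) := by
  obtain ⟨hq, hqν, hqmax⟩ := hq
  refine ⟨⟨hq, dominates_iff.2 fun k => (dominates_iff.1 hqν k).trans
    (by have := hν k; omega), fun r hr hrμ => ?_⟩, fun k => ?_⟩
  · refine hqmax r hr (dominates_iff.2 fun k => ?_)
    have := hν k
    have := dominates_iff.1 hrμ k
    split_ifs at * with hk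
    · have := hlt r hr hrμ k hk.1 hk.2
      omega
    · omega
  · have := hν k
    split_ifs at this with hk
    · have := hwin k hk.1 hk.2
      rcases hqcases k with h | h <;> omega
    · rcases hqcases k with h | h <;> omega

theorem exists_isCollapse (hNε : ε % 2 = 1 → N % 2 = 0) (μ : SpPartition N) :
    ∃ q, IsCollapse ε μ q ∧ ∀ k, psum q k = psum μ k ∨
      (psum q k + 1 = psum μ k ∧ (psum μ k + (ε + 1) * k) % 2 = 1) := by
  induction hφ : ∑ k ∈ range (N + 1), psum μ k using Nat.strong_induction_on generalizing μ with
  | _ φ ih =>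
  by_cases hbad : ∃ k, μ.part (k + 1) < μ.part k ∧ (psum μ (k + 1) + (ε + 1) * (k + 1)) % 2 = 1
  case neg =>
    push Not at hbad
    refine ⟨μ, ⟨(evenMult_iff_corner ε μ).2 fun k hk => ?_, fun _ => le_rfl, fun _ _ h => h⟩,
      fun _ => Or.inl rfl⟩
    have := hbad k hk
    omega
  obtain ⟨k₀, ⟨hc, hodd⟩, hmin⟩ : ∃ k₀, (μ.part (k₀ + 1) < μ.part k₀ ∧
      (psum μ (k₀ + 1) + (ε + 1) * (k₀ + 1)) % 2 = 1) ∧ ∀ k < k₀, μ.part (k + 1) < μ.part k →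
      (psum μ (k + 1) + (ε + 1) * (k + 1)) % 2 = 0 :=
    ⟨Nat.find hbad, Nat.find_spec hbad, fun k hk hck => by
      have := Nat.find_min hbad hk
      omega⟩
  obtain ⟨j₀, hkj, hwin, hlt, ν, hν⟩ := exists_collapse_step hNε hc hodd hmin
  have hk₀N : k₀ < N := not_le.1 fun h => by rw [part_eq_zero_of_le μ h] at hc; omega
  have hφν : ∑ k ∈ range (N + 1), psum ν k < φ := by
    rw [← hφ]
    refine sum_lt_sum (fun k _ => show psum ν k ≤ psum μ k by have := hν k; omega)
      ⟨k₀ + 1, by simp; omega, ?_⟩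
    have := hν (k₀ + 1)
    rw [if_pos (by omega)] at this
    omega
  obtain ⟨q, hq, hqcases⟩ := ih _ hφν ν rfl
  exact ⟨q, hq.of_step hν hwin hlt hqcases⟩

theorem IsCollapse.psum_eq {μ q q' : SpPartition N} (hq : IsCollapse ε μ q)
    (hq' : IsCollapse ε μ q') (k : ℕ) : psum q k = psum q' k :=
  le_antisymm (hq'.2.2 q hq.1 hq.2.1 k) (hq.2.2 q' hq'.1 hq'.2.1 k)

theorem IsCollapse.psum_cases (hNε : ε % 2 = 1 → N % 2 = 0) {μ q : SpPartition N}
    (hq : IsCollapse ε μ q) (k : ℕ) : psum q k = psum μ k ∨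
      (psum q k + 1 = psum μ k ∧ (psum μ k + (ε + 1) * k) % 2 = 1) := by
  obtain ⟨q', hq', hcases⟩ := exists_isCollapse hNε μ
  rw [hq.psum_eq hq' k]
  exact hcases k

theorem IsCollapse.dominates {μ₁ μ₂ q₁ q₂ : SpPartition N} (hq₁ : IsCollapse ε μ₁ q₁)
    (hq₂ : IsCollapse ε μ₂ q₂) (hμ : Dominates μ₁ μ₂) : Dominates q₁ q₂ :=
  hq₁.2.2 q₂ hq₂.1 (hμ.trans hq₂.2.1)

theorem sum_add_ite_eq_psum_of_minus (p : SpPartition M) (hM : M ≠ 0) {g : ℕ → ℕ}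
    (hg : ∀ i, i + 1 ≠ height p 0 → g i = p.part i)
    (hlast : g (height p 0 - 1) = p.part (height p 0 - 1) - 1) (k : ℕ) :
    ∑ i ∈ range k, g i + (if height p 0 ≤ k then 1 else 0) = psum p k := by
  have hh := height_zero_pos (p := p) hM
  induction k with
  | zero => simp; omega
  | succ k ih =>
    rw [sum_range_succ, psum_succ]
    by_cases hk : k + 1 = height p 0
    · have hpos : 1 ≤ p.part k := by have := lt_height_iff.1 (show k < height p 0 by omega); omega
      have hgk : g k = p.part k - 1 := by simpa [← hk] using hlast
      rw [hgk]
      split_ifs at ih ⊢ <;> omega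
    · rw [hg k hk]
      split_ifs at ih ⊢ <;> omega

theorem IsMinus.psum_add {p : SpPartition M} {pm : SpPartition N} (hM : M ≠ 0)
    (hm : IsMinus p pm) (k : ℕ) : psum pm k + (if height p 0 ≤ k then 1 else 0) = psum p k :=
  sum_add_ite_eq_psum_of_minus p hM hm.1 hm.2 k

theorem exists_isMinus (p : SpPartition (N + 1)) : ∃ pm : SpPartition N, IsMinus p pm := by
  set h := height p 0
  have hh : 1 ≤ h := height_zero_pos (by omega)
  set f : ℕ → ℕ := fun i => if i + 1 = h then p.part i - 1 else p.part i
  have hf : ∀ i, i + 1 ≠ h → f i = p.part i := fun i hi => if_neg hi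
  have hlast : f (h - 1) = p.part (h - 1) - 1 := if_pos (by omega)
  have hanti : Antitone f := antitone_nat_of_succ_le fun i => by
    have h₁ := p.antitone (Nat.le_add_right i 1)
    have h₂ : i + 1 = h → p.part (i + 1) = 0 := fun hi => by
      have : ¬ max 0 1 ≤ p.part (i + 1) := fun hc => by have := lt_height_iff.2 hc; omega
      omega
    simp only [f]
    split_ifs <;> omega
  have hsum := sum_add_ite_eq_psum_of_minus p (by omega) hf hlast
    (max p.bound h)
  rw [if_pos (le_max_right _ _), psum_of_bound_le p (le_max_left _ _)] at hsum
  refine ⟨⟨f, fun i j hij => hanti hij, max p.bound h, fun i hi => ?_, by omega⟩, hf, hlast⟩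
  rw [hf i (by omega)]
  exact p.bound_zero i (by omega)

theorem IsPlus.psum_eq {p : SpPartition M} {pp : SpPartition N} (hp : IsPlus p pp) {k : ℕ}
    (hk : 1 ≤ k) : psum pp k = psum p k + 1 := by
  induction k with
  | zero => omega
  | succ k ih =>
    rcases Nat.eq_zero_or_pos k with rfl | h
    · simp [psum_one, hp.1]
    · rw [psum_succ, psum_succ, ih h, hp.2 k h]
      omega

theorem exists_isPlus (p : SpPartition N) : ∃ pp : SpPartition (N + 1), IsPlus p pp := by
  set f : ℕ → ℕ := fun i => if i = 0 then p.part 0 + 1 else p.part i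
  have hanti : Antitone f := antitone_nat_of_succ_le fun i => by
    have := p.antitone (Nat.le_add_right i 1)
    have := p.antitone (Nat.zero_le (i + 1))
    simp only [f, Nat.add_one_ne_zero, if_false]
    split_ifs <;> omega
  have hsum : ∀ k, 1 ≤ k → ∑ i ∈ range k, f i = psum p k + 1 := by
    intro k hk
    induction k with
    | zero => omega
    | succ k ih =>
      rcases Nat.eq_zero_or_pos k with rfl | h
      · simp [f, psum_one]
      · rw [sum_range_succ, psum_succ, ih h, show f k = p.part k from if_neg (by omega)]
        omega
  refine ⟨⟨f, fun i j hij => hanti hij, p.bound + 1, fun i hi => ?_, ?_⟩, rfl,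
    fun i hi => if_neg (by omega)⟩
  · rw [show f i = p.part i from if_neg (by omega)]
    exact p.bound_zero i (by omega)
  · rw [hsum _ (by omega), psum_of_bound_le p (by omega)]

theorem heightCond_iff_corner (ε ε' : ℕ) (p : SpPartition N) :
    (∀ s, 1 ≤ s → mult p s ≠ 0 → s % 2 = ε % 2 → height p s % 2 = ε' % 2) ↔
      ∀ k, p.part (k + 1) < p.part k → p.part k % 2 = ε % 2 → (k + 1) % 2 = ε' % 2 := by
  constructor
  · intro h k hc hk
    rw [← height_eq_of_part_succ_lt hc]
    exact h _ (by omega) (mult_ne_zero_of_part_succ_lt hc) hk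
  · intro h s hs hm hsε
    obtain ⟨k, hc, rfl⟩ := exists_part_succ_lt_of_mult_ne_zero hs hm
    rw [height_eq_of_part_succ_lt hc]
    exact h k hc hsε

theorem height_zero_mod_two {p : SpPartition N} (hem : EvenMult 0 p) :
    height p 0 % 2 = N % 2 := by
  rcases Nat.eq_zero_or_pos (height p 0) with h | h
  · have := psum_height_zero p
    simp only [h, psum_zero] at this
    omega
  · have := (evenMult_iff_corner 0 p).1 hem _ (part_lt_part_pred_height h)
    rw [Nat.sub_add_cancel h, psum_height_zero] at this
    omega

theorem specialCond_zero_one_iff_s10 (hN : N % 2 = 1) (p : SpPartition N) :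
    SpecialCond 0 1 p ↔ EvenMult 0 p ∧
      ∀ k, p.part (k + 1) < p.part k → p.part k % 2 = 0 → (k + 1) % 2 = 1 := by
  rw [SpecialCond, heightCond_iff_corner]
  exact ⟨fun h => ⟨h.1, h.2.1⟩, fun h => ⟨h.1, h.2, fun _ => by rw [height_zero_mod_two h.1, hN]⟩⟩

theorem specialCond_one_zero_iff (q : SpPartition N) :
    SpecialCond 1 0 q ↔ EvenMult 1 q ∧
      ∀ k, q.part (k + 1) < q.part k → q.part k % 2 = 1 → (k + 1) % 2 = 0 := by
  rw [SpecialCond, heightCond_iff_corner]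
  exact ⟨fun h => ⟨h.1, h.2.1⟩, fun h => ⟨h.1, h.2, by omega⟩⟩

theorem exists_corner_of_lt_height (p : SpPartition N) {k : ℕ} (hk : 1 ≤ k)
    (hkh : k < height p 0) : ∃ c, k ≤ c + 1 ∧ p.part (c + 1) < p.part c ∧
      p.part c = p.part (k - 1) ∧ psum p (c + 1) = psum p k + p.part (k - 1) * (c + 1 - k) := by
  set w := p.part (k - 1)
  have hw : 1 ≤ w := by have := lt_height_iff.1 (show k - 1 < height p 0 by omega); omega
  have hkw : k - 1 < height p w := lt_height_iff.2 (by omega)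
  have hblock : ∀ i, k - 1 ≤ i → i < height p w → p.part i = w := fun i h₁ h₂ => by
    have := lt_height_iff.1 h₂
    have := p.antitone h₁
    omega
  refine ⟨height p w - 1, by omega, part_lt_part_pred_height (by omega),
    hblock _ (by omega) (by omega), ?_⟩
  rw [Nat.sub_add_cancel (by omega)]
  have := psum_add_of_part_eq p (a := k) (d := height p w - k) (w := w)
    fun i h₁ h₂ => hblock i (by omega) (by omega)
  rwa [Nat.add_sub_cancel' (by omega)] at this

theorem psum_add_ite_mod_two_B {p : SpPartition N} (hsp : SpecialCond 0 1 p) {k : ℕ}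
    (hk : 1 ≤ k) (hkh : k < height p 0) :
    (psum p k + if p.part (k - 1) % 2 = 1 then k else 1) % 2 = 0 := by
  obtain ⟨c, hkc, hc, hcw, hsum⟩ := exists_corner_of_lt_height p hk hkh
  have hev := (evenMult_iff_corner 0 p).1 hsp.1 c hc
  split_ifs with hw
  · have := mul_mod_two_of_odd hw (c + 1 - k)
    omega
  · have := mul_mod_two_of_even (a := p.part (k - 1)) (by omega) (c + 1 - k)
    have := ((heightCond_iff_corner 0 1 p).1 hsp.2.1) c hc (by omega)
    omega

theorem psum_add_ite_mod_two_C {q : SpPartition N} (hsq : SpecialCond 1 0 q) {k : ℕ}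
    (hk : 1 ≤ k) (hkh : k < height q 0) :
    (psum q k + if q.part (k - 1) % 2 = 1 then k else 0) % 2 = 0 := by
  obtain ⟨c, hkc, hc, hcw, hsum⟩ := exists_corner_of_lt_height q hk hkh
  have hev := (evenMult_iff_corner 1 q).1 hsq.1 c hc
  split_ifs with hw
  · have := mul_mod_two_of_odd hw (c + 1 - k)
    have := ((heightCond_iff_corner 1 0 q).1 hsq.2.1) c hc (by omega)
    omega
  · have := mul_mod_two_of_even (a := q.part (k - 1)) (by omega) (c + 1 - k)
    omega

theorem mod_two_of_psum_even_B (hN : N % 2 = 1) {p : SpPartition N} (hsp : SpecialCond 0 1 p)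
    {k : ℕ} (hk : 1 ≤ k) (hev : psum p k % 2 = 0) : k % 2 = 0 ∧ p.part (k - 1) % 2 = 1 := by
  have hkh : k < height p 0 := not_le.1 fun h => by rw [psum_of_height_le h] at hev; omega
  have := psum_add_ite_mod_two_B hsp hk hkh
  split_ifs at this with hw <;> omega

theorem mod_two_of_psum_odd_C (hN : N % 2 = 0) {q : SpPartition N} (hsq : SpecialCond 1 0 q)
    {k : ℕ} (hk : 1 ≤ k) (hodd : psum q k % 2 = 1) : k % 2 = 1 ∧ q.part (k - 1) % 2 = 1 := by
  have hkh : k < height q 0 := not_le.1 fun h => by rw [psum_of_height_le h] at hodd; omega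
  have := psum_add_ite_mod_two_C hsq hk hkh
  split_ifs at this with hw <;> omega

theorem part_pred_le_of_psum_eq {A B : SpPartition N} (h : Dominates B A) {k : ℕ}
    (heq : psum A k = psum B k) (hk : 1 ≤ k) : B.part (k - 1) ≤ A.part (k - 1) := by
  have := h (k - 1)
  rw [psum_of_pos A hk, psum_of_pos B hk] at heq
  unfold psum at heq
  omega

theorem part_le_of_psum_eq {A B : SpPartition N} (h : Dominates B A) {k : ℕ}
    (heq : psum A k = psum B k) : A.part k ≤ B.part k := by
  have := h (k + 1)
  rw [← psum, ← psum, psum_succ, psum_succ] at this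
  omega

theorem exists_corner_of_psum_lt {A B : SpPartition N} (hle : ∀ k, psum A k ≤ psum B k + 1)
    (hlt : ∃ k, psum B k < psum A k) :
    ∃ k, 1 ≤ k ∧ psum A k = psum B k + 1 ∧ A.part k < A.part (k - 1) := by
  obtain ⟨k₀, hk₀⟩ := hlt
  have hk₀N : k₀ ≤ N := not_lt.1 fun h => by rw [psum_of_le A h.le, psum_of_le B h.le] at hk₀; omega
  have hspec : psum B (Nat.findGreatest (fun m => psum B m < psum A m) N)
      < psum A (Nat.findGreatest (fun m => psum B m < psum A m) N) :=
    Nat.findGreatest_spec (P := fun m => psum B m < psum A m) hk₀N hk₀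
  set k := Nat.findGreatest (fun m => psum B m < psum A m) N
  have hnext : psum A (k + 1) ≤ psum B (k + 1) := by
    by_cases h : k + 1 ≤ N
    · exact not_lt.1 (Nat.findGreatest_is_greatest (P := fun m => psum B m < psum A m)
        (Nat.lt_succ_self k) h)
    · rw [psum_of_le A (by omega), psum_of_le B (by omega)]
  have hk : 1 ≤ k := Nat.one_le_iff_ne_zero.2 fun h => by simp [h] at hspec
  have := hle k
  have := hle (k - 1)
  have := B.antitone (Nat.sub_le k 1)
  have := psum_of_pos A hk
  have := psum_of_pos B hk
  rw [psum_succ, psum_succ] at hnext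
  exact ⟨k, hk, by omega, by omega⟩

theorem part_pred_eq_of_evenMult {p : SpPartition N} (hem : EvenMult ε p) {k : ℕ}
    (hc : p.part (k + 1) < p.part k) (hpar : p.part k % 2 = ε % 2) :
    1 ≤ k ∧ p.part (k - 1) = p.part k := by
  have hm := mult_ne_zero_of_part_succ_lt hc
  have heven := hem _ (by omega) hpar
  have h := height_succ_add_mult p (s := p.part k) (by omega)
  rw [height_eq_of_part_succ_lt hc] at h
  have : ¬ max (p.part k + 1) 1 ≤ p.part (k - 1) := fun hc => by
    have := lt_height_iff.2 hc; omega
  have := p.antitone (Nat.sub_le k 1)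
  omega

theorem exists_isFBC (p : SpPartition (2 * n + 1)) : ∃ q, IsFBC n p q := by
  obtain ⟨pm, hm⟩ := exists_isMinus p
  obtain ⟨q, hq, -⟩ := exists_isCollapse (ε := 1) (fun _ => by omega) pm
  exact ⟨q, pm, hm, hq⟩

theorem IsFBC.psum_bounds {p : SpPartition (2 * n + 1)} {q : SpPartition (2 * n)}
    (hf : IsFBC n p q) : (∀ k, psum q k ≤ psum p k) ∧ ∀ k, psum p k ≤ psum q k + 1 := by
  obtain ⟨pm, hm, hq⟩ := hf
  refine ⟨fun k => ?_, fun k => ?_⟩ <;> have hpm := hm.psum_add (by omega) k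
  · have := dominates_iff.1 hq.2.1 k
    split_ifs at hpm <;> omega
  · have hcases := hq.psum_cases (fun _ => by omega) k
    split_ifs at hpm with hk
    · have := psum_of_height_le hk
      omega
    · omega

theorem IsFBC.specialCond {p : SpPartition (2 * n + 1)} {q : SpPartition (2 * n)}
    (hsp : SpecialCond 0 1 p) (hf : IsFBC n p q) : SpecialCond 1 0 q := by
  obtain ⟨pm, hm, hcol⟩ := hf
  refine (specialCond_one_zero_iff q).2 ⟨hcol.1, fun k hc hodd => ?_⟩
  by_contra hK
  obtain ⟨hk, hpred⟩ := part_pred_eq_of_evenMult hcol.1 hc hodd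
  have hqk : psum q k % 2 = 1 := by
    have := (evenMult_iff_corner 1 q).1 hcol.1 k hc
    rw [psum_succ] at this
    omega
  have hpmk : psum pm k = psum q k := by
    rcases hcol.psum_cases (fun _ => by omega) k with h | h <;> omega
  have hpm := hm.psum_add (by omega) k
  have hkh : k < height p 0 := not_le.1 fun h => by
    rw [if_pos h, psum_of_height_le h] at hpm
    omega
  rw [if_neg (by omega)] at hpm
  have hpw : p.part (k - 1) % 2 = 0 := by
    have := psum_add_ite_mod_two_B hsp hk hkh
    split_ifs at this <;> omega
  have hlast : pm.part (k - 1) = p.part (k - 1) := hm.1 (k - 1) (by omega)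
  have h₁ := part_pred_le_of_psum_eq hcol.2.1 hpmk.symm hk
  have h₂ := part_le_of_psum_eq hcol.2.1 hpmk.symm
  have h₃ := pm.antitone (Nat.sub_le k 1)
  omega

theorem IsCollapse.psum_bounds_of_isPlus {q : SpPartition N} {pp p : SpPartition (N + 1)}
    (hpp : IsPlus q pp) (hp : IsCollapse 0 pp p) :
    (∀ k, psum q k ≤ psum p k) ∧ ∀ k, psum p k ≤ psum q k + 1 := by
  constructor <;> intro k <;> rcases Nat.eq_zero_or_pos k with rfl | hk
  all_goals try simp
  · have := hpp.psum_eq hk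
    rcases hp.psum_cases (by omega) k with h | h <;> omega
  · have := hpp.psum_eq hk
    have := dominates_iff.1 hp.2.1 k
    omega

theorem IsCollapse.specialCond_of_isPlus {q : SpPartition (2 * n)} {pp p : SpPartition (2 * n + 1)}
    (hsq : SpecialCond 1 0 q) (hpp : IsPlus q pp) (hp : IsCollapse 0 pp p) :
    SpecialCond 0 1 p := by
  refine (specialCond_zero_one_iff_s10 (by omega) p).2 ⟨hp.1, fun k hc hev => ?_⟩
  by_contra hK
  obtain ⟨hk, hpred⟩ := part_pred_eq_of_evenMult hp.1 hc hev
  have hpk : psum p k % 2 = 0 := by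
    have := (evenMult_iff_corner 0 p).1 hp.1 k hc
    rw [psum_succ] at this
    omega
  have hppk : psum pp k = psum p k := by
    rcases hp.psum_cases (by omega) k with h | h <;> omega
  have hqk := hpp.psum_eq hk
  obtain ⟨-, hqw⟩ := mod_two_of_psum_odd_C (by omega) hsq hk (by omega)
  have h₁ := part_pred_le_of_psum_eq hp.2.1 hppk.symm hk
  have h₂ := part_le_of_psum_eq hp.2.1 hppk.symm
  have h₃ := q.antitone (Nat.sub_le k 1)
  have h₄ : q.part (k - 1) ≤ pp.part (k - 1) := by
    rcases Nat.eq_zero_or_pos (k - 1) with h | h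
    · rw [h, hpp.1]; omega
    · rw [hpp.2 _ h]
  rw [hpp.2 k hk] at h₂
  omega

theorem IsFBC.part_eq_of_bounds {p : SpPartition (2 * n + 1)} {q q' : SpPartition (2 * n)}
    (hsp : SpecialCond 0 1 p) (hsq : SpecialCond 1 0 q) (hqp : ∀ k, psum q k ≤ psum p k)
    (hpq : ∀ k, psum p k ≤ psum q k + 1) (hf : IsFBC n p q') : q'.part = q.part := by
  obtain ⟨pm, hm, hcol⟩ := hf
  have hpm := fun k => hm.psum_add (by omega) k
  have hpmq : Dominates pm q := dominates_iff.2 fun k => by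
    have := hpm k
    have := hqp k
    have := psum_le q k
    split_ifs at * with hk
    · rw [psum_of_height_le hk] at *; omega
    · omega
  have hq'pm := dominates_iff.1 hcol.2.1
  refine part_eq_of_psum_eq fun k => le_antisymm (not_lt.1 fun hlt => ?_)
    (hcol.2.2 q hsq.1 hpmq k)
  have hle : ∀ k, psum q' k ≤ psum q k + 1 := fun k => by
    have := hq'pm k
    have := hpm k
    have := hpq k
    omega
  obtain ⟨k, hk, heq, hc⟩ := exists_corner_of_psum_lt hle ⟨k, hlt⟩
  have hev := (evenMult_iff_corner 1 q').1 hcol.1 (k - 1) (by rwa [Nat.sub_add_cancel hk])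
  rw [Nat.sub_add_cancel hk] at hev
  have hkodd := (mod_two_of_psum_odd_C (by omega) hsq hk (by omega)).1
  have hpk : psum p k = psum q k + 1 := by
    have := hq'pm k
    have := hpm k
    have := hpq k
    omega
  have hkev := (mod_two_of_psum_even_B (by omega) hsp hk (by omega)).1
  omega

theorem IsCollapse.part_eq_of_bounds {p p' : SpPartition (2 * n + 1)} {q : SpPartition (2 * n)}
    {pp : SpPartition (2 * n + 1)} (hsp : SpecialCond 0 1 p) (hsq : SpecialCond 1 0 q)
    (hqp : ∀ k, psum q k ≤ psum p k) (hpq : ∀ k, psum p k ≤ psum q k + 1)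
    (hpp : IsPlus q pp) (hp' : IsCollapse 0 pp p') : p'.part = p.part := by
  have hpsum : ∀ k, 1 ≤ k → psum pp k = psum q k + 1 := fun k hk => hpp.psum_eq hk
  have hppp : Dominates pp p := dominates_iff.2 fun k => by
    rcases Nat.eq_zero_or_pos k with rfl | hk
    · exact le_rfl
    · have := hpsum k hk
      have := hpq k
      omega
  refine part_eq_of_psum_eq fun k => le_antisymm (not_lt.1 fun hlt => ?_)
    (hp'.2.2 p hsp.1 hppp k)
  have hle : ∀ k, psum p' k ≤ psum p k + 1 := fun k => by
    have := dominates_iff.1 hp'.2.1 k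
    rcases Nat.eq_zero_or_pos k with rfl | hk
    · simp
    · have := hpsum k hk
      have := hqp k
      omega
  obtain ⟨k, hk, heq, hc⟩ := exists_corner_of_psum_lt hle ⟨k, hlt⟩
  have hev := (evenMult_iff_corner 0 p').1 hp'.1 (k - 1) (by rwa [Nat.sub_add_cancel hk])
  rw [Nat.sub_add_cancel hk] at hev
  rcases Nat.mod_two_eq_zero_or_one (psum p k) with hpk | hpk
  · have := (mod_two_of_psum_even_B (by omega) hsp hk hpk).1
    omega
  · have := dominates_iff.1 hp'.2.1 k
    have := hpsum k hk
    have := hqp k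
    have := (mod_two_of_psum_odd_C (by omega) hsq hk (by omega)).1
    omega

theorem IsFBC.dominates {p₁ p₂ : SpPartition (2 * n + 1)} {q₁ q₂ : SpPartition (2 * n)}
    (hf₁ : IsFBC n p₁ q₁) (hf₂ : IsFBC n p₂ q₂) (hp : Dominates p₁ p₂) : Dominates q₁ q₂ := by
  obtain ⟨pm₁, hm₁, hq₁⟩ := hf₁
  obtain ⟨pm₂, hm₂, hq₂⟩ := hf₂
  refine hq₁.dominates hq₂ (dominates_iff.2 fun k => ?_)
  have e₁ := hm₁.psum_add (by omega) k
  have e₂ := hm₂.psum_add (by omega) k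
  have := dominates_iff.1 hp k
  split_ifs at e₁ e₂ with h₁ h₂ h₂
  · omega
  · have := psum_lt_of_lt_height (not_le.1 h₂)
    have := psum_of_height_le h₁
    omega
  all_goals omega

theorem exists_isFBC_part_eq {q : SpPartition (2 * n)} (hsq : SpecialCond 1 0 q) :
    ∃ (p : SpPartition (2 * n + 1)) (q' : SpPartition (2 * n)),
      SpecialCond 0 1 p ∧ IsFBC n p q' ∧ q'.part = q.part := by
  obtain ⟨pp, hpp⟩ := exists_isPlus q
  obtain ⟨p, hp, -⟩ := exists_isCollapse (ε := 0) (by omega) pp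
  have hsp := hp.specialCond_of_isPlus hsq hpp
  obtain ⟨hqp, hpq⟩ := hp.psum_bounds_of_isPlus hpp
  obtain ⟨q', hq'⟩ := exists_isFBC p
  exact ⟨p, q', hsp, hq', hq'.part_eq_of_bounds hsp hsq hqp hpq⟩

theorem IsFBC.part_eq_of_part_eq {p₁ p₂ : SpPartition (2 * n + 1)} {q₁ q₂ : SpPartition (2 * n)}
    (hsp₁ : SpecialCond 0 1 p₁) (hsp₂ : SpecialCond 0 1 p₂) (hf₁ : IsFBC n p₁ q₁)
    (hf₂ : IsFBC n p₂ q₂) (hq : q₁.part = q₂.part) : p₁.part = p₂.part := by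
  have hsq := hf₁.specialCond hsp₁
  obtain ⟨pp, hpp⟩ := exists_isPlus q₁
  obtain ⟨p, hp, -⟩ := exists_isCollapse (ε := 0) (by omega) pp
  obtain ⟨hqp₁, hpq₁⟩ := hf₁.psum_bounds
  obtain ⟨hqp₂, hpq₂⟩ := hf₂.psum_bounds
  simp only [psum, ← hq] at hqp₂ hpq₂
  rw [← hp.part_eq_of_bounds hsp₁ hsq hqp₁ hpq₁ hpp, hp.part_eq_of_bounds hsp₂ hsq hqp₂ hpq₂ hpp]

end SpPartition

/-- `f_{BC}(p) = (p⁻)_C` maps `P^{sp}_B(2n+1)` bijectively onto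
`P^{sp}_C(2n)` and preserves the dominance order. -/
theorem fBC_bijective_orderPreserving (n : ℕ) :
    (∀ p : SpPartition (2 * n + 1), SpPartition.SpecialCond 0 1 p →
      ∃ q : SpPartition (2 * n), SpPartition.IsFBC n p q) ∧
    (∀ (p : SpPartition (2 * n + 1)) (q : SpPartition (2 * n)),
      SpPartition.SpecialCond 0 1 p → SpPartition.IsFBC n p q →
      SpPartition.SpecialCond 1 0 q) ∧
    (∀ q : SpPartition (2 * n), SpPartition.SpecialCond 1 0 q →
      ∃ (p : SpPartition (2 * n + 1)) (q' : SpPartition (2 * n)),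
        SpPartition.SpecialCond 0 1 p ∧ SpPartition.IsFBC n p q' ∧ q'.part = q.part) ∧
    (∀ (p₁ p₂ : SpPartition (2 * n + 1)) (q₁ q₂ : SpPartition (2 * n)),
      SpPartition.SpecialCond 0 1 p₁ → SpPartition.SpecialCond 0 1 p₂ →
      SpPartition.IsFBC n p₁ q₁ → SpPartition.IsFBC n p₂ q₂ →
      q₁.part = q₂.part → p₁.part = p₂.part) ∧
    (∀ (p₁ p₂ : SpPartition (2 * n + 1)) (q₁ q₂ : SpPartition (2 * n)),
      SpPartition.SpecialCond 0 1 p₁ → SpPartition.SpecialCond 0 1 p₂ →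
      SpPartition.IsFBC n p₁ q₁ → SpPartition.IsFBC n p₂ q₂ →
      SpPartition.Dominates p₁ p₂ → SpPartition.Dominates q₁ q₂) :=
  ⟨fun p _ => SpPartition.exists_isFBC p,
    fun _ _ hsp hf => hf.specialCond hsp,
    fun _ hsq => SpPartition.exists_isFBC_part_eq hsq,
    fun _ _ _ _ hsp₁ hsp₂ hf₁ hf₂ hq => hf₁.part_eq_of_part_eq hsp₁ hsp₂ hf₂ hq,
    fun _ _ _ _ _ _ hf₁ hf₂ hp => hf₁.dominates hf₂ hp⟩
end

section
/- The maps f_{BC}: P^{sp}_B(2n+1) → P^{sp}_C(2n), λ ↦ (λ⁻)_C, and f_{CB}: P^{sp}_C(2n) → P^{sp}_B(2n+1), λ ↦ (λ⁺)_B, are mutually inverse bijections. -/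
/-- A partition of `N`: a weakly decreasing function `ℕ → ℕ` (0-indexed parts,
eventually zero) whose sum is `N`. -/
structure Partition' (N : ℕ) where
  part : ℕ → ℕ
  antitone : ∀ ⦃i j : ℕ⦄, i ≤ j → part j ≤ part i
  bound : ℕ
  bound_zero : ∀ i, bound ≤ i → part i = 0
  sum_parts : ∑ i ∈ Finset.range bound, part i = N

namespace Partition'

variable {M N : ℕ}

/-- Multiplicity of the part `s` in `p` (intended for `s ≥ 1`). -/
def mult (p : Partition' N) (s : ℕ) : ℕ :=
  ((Finset.range p.bound).filter (fun j => p.part j = s)).card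

/-- Height `h_p(s) = #{j : p_j ≥ s}`, with the convention that `height p 0`
is the number of (positive) parts of `p`. -/
def height (p : Partition' N) (s : ℕ) : ℕ :=
  ((Finset.range p.bound).filter (fun j => max s 1 ≤ p.part j)).card

/-- `Dominates lam mu` means `mu ⪯ lam` in the dominance order. -/
def Dominates (lam mu : Partition' N) : Prop :=
  ∀ k : ℕ, ∑ i ∈ Finset.range k, mu.part i ≤ ∑ i ∈ Finset.range k, lam.part i

/-- The transpose (conjugate) part function: `(p*)_i = #{j : p_j ≥ i+1}` (0-indexed). -/
def transposeFun (p : Partition' N) : ℕ → ℕ :=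
  fun i => ((Finset.range p.bound).filter (fun j => i + 1 ≤ p.part j)).card

/-- Every (positive) part congruent to `ε` mod 2 has even multiplicity. -/
def EvenMult (ε : ℕ) (p : Partition' N) : Prop :=
  ∀ s, 1 ≤ s → s % 2 = ε % 2 → mult p s % 2 = 0

/-- Membership in `P_{ε,ε'}(N)`: parts `≡ ε (mod 2)` have even multiplicity and
height `≡ ε' (mod 2)`, including the convention at `s = 0` (whose height is the
number of parts) when `ε = 0`. -/
def SpecialCond (ε ε' : ℕ) (p : Partition' N) : Prop :=
  EvenMult ε p ∧
  (∀ s, 1 ≤ s → mult p s ≠ 0 → s % 2 = ε % 2 → height p s % 2 = ε' % 2) ∧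
  (ε = 0 → height p 0 % 2 = ε' % 2)

/-- `q` is the `ε`-collapse of `p`: the dominance-greatest partition dominated by `p`
all of whose parts `≡ ε (mod 2)` have even multiplicity. -/
def IsCollapse (ε : ℕ) (p q : Partition' N) : Prop :=
  EvenMult ε q ∧ Dominates p q ∧
    ∀ r : Partition' N, EvenMult ε r → Dominates p r → Dominates q r

/-- `q = p⁻`: decrease the smallest (positive) part of `p` by one. -/
def IsMinus (p : Partition' M) (q : Partition' N) : Prop :=
  (∀ i, i + 1 ≠ height p 0 → q.part i = p.part i) ∧
  q.part (height p 0 - 1) = p.part (height p 0 - 1) - 1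

/-- `q = p⁺`: increase the largest part of `p` by one. -/
def IsPlus (p : Partition' M) (q : Partition' N) : Prop :=
  q.part 0 = p.part 0 + 1 ∧ ∀ i, 1 ≤ i → q.part i = p.part i

/-- `q = f_{BC}(p) = (p⁻)_C`. -/
def IsFBC (n : ℕ) (p : Partition' (2*n+1)) (q : Partition' (2*n)) : Prop :=
  ∃ pm : Partition' (2*n), IsMinus p pm ∧ IsCollapse 1 pm q

/-- `q = f_{CB}(p) = (p⁺)_B`. -/
def IsFCB (n : ℕ) (p : Partition' (2*n)) (q : Partition' (2*n+1)) : Prop :=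
  ∃ pp : Partition' (2*n+1), IsPlus p pp ∧ IsCollapse 0 pp q

end Partition'

/-!
A partition is determined by its partial sums `σ k = p.partialSum k`, and dominance is the
pointwise order on them. Put `c = 1 - e` and call `k` a defect of `p` when `σ k + c * k` is odd.
All parts `≡ e (mod 2)` have even multiplicity iff no corner of `p` is a defect, and the
`e`-collapse of `λ` lowers by one exactly those partial sums that lie in a run of defects of `λ`
between two corners. Moreover, a partition `ν` with this parity property is the collapse of `λ`
as soon as the partial sums of `λ` exceed those of `ν` by at most one, and only at non-defects
of `ν`.

For `p ∈ P_B(2n+1)`, the height conditions put every defect `k` of `p` (for `c = 1`) inside the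
block of an even part of odd height, which makes `k` part of a defect run of `p⁻` (for `c = 0`).
Hence the partial sums of `((p⁻)_C)⁺` exceed those of `p` by at most one, and only at
non-defects of `p`, so `p = (((p⁻)_C)⁺)_B`. The other composite is handled in the same way, with
odd parts of even height, and the height conditions on the images are read off just before the
corner that ends the block of a part.
-/

namespace Partition'

variable {M N : ℕ}

def partialSum (p : Partition' N) (k : ℕ) : ℕ := ∑ i ∈ Finset.range k, p.part i

lemma dominates_iff {lam mu : Partition' N} :
    Dominates lam mu ↔ ∀ k, mu.partialSum k ≤ lam.partialSum k := Iff.rfl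

section Basic

variable (p : Partition' N)

@[simp] lemma partialSum_zero : p.partialSum 0 = 0 := by simp [partialSum]

lemma partialSum_succ (k : ℕ) : p.partialSum (k + 1) = p.partialSum k + p.part k :=
  Finset.sum_range_succ _ _

lemma partialSum_mono : Monotone p.partialSum := fun _ _ h =>
  Finset.sum_le_sum_of_subset (Finset.range_subset_range.2 h)

lemma partialSum_of_bound_le {k : ℕ} (hk : p.bound ≤ k) : p.partialSum k = N := by
  refine (Finset.sum_subset (Finset.range_subset_range.2 hk) fun i _ hi => ?_).symm.trans
    p.sum_parts
  exact p.bound_zero i (by simpa using hi)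

lemma partialSum_le (k : ℕ) : p.partialSum k ≤ N :=
  (p.partialSum_mono (le_max_left k p.bound)).trans_eq
    (p.partialSum_of_bound_le (le_max_right _ _))

lemma partialSum_of_part_eq_zero {k : ℕ} (hk : p.part k = 0) : p.partialSum k = N := by
  refine (Finset.sum_subset (Finset.range_subset_range.2 (le_max_left _ _)) fun i _ hi => ?_).trans
    (p.partialSum_of_bound_le (le_max_right k p.bound))
  exact Nat.le_zero.1 (hk ▸ p.antitone (by simpa using hi))

lemma part_eq_of_dominates {q : Partition' N} (h : Dominates p q) (h' : Dominates q p) :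
    p.part = q.part := by
  have hsum k : p.partialSum k = q.partialSum k := le_antisymm (h' k) (h k)
  funext i
  have := p.partialSum_succ i
  have := q.partialSum_succ i
  have := hsum i
  have := hsum (i + 1)
  omega

lemma lt_height_iff {s : ℕ} (hs : 1 ≤ s) {i : ℕ} : i < p.height s ↔ s ≤ p.part i := by
  rw [height, max_eq_left hs]
  constructor
  · intro h
    by_contra! hi
    refine h.not_ge ((Finset.card_le_card fun j hj => ?_).trans (Finset.card_range i).le)
    simp only [Finset.mem_filter, Finset.mem_range] at hj ⊢
    by_contra! hij
    exact absurd (hj.2.trans (p.antitone hij)) (by omega)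
  · intro h
    have hib : i < p.bound := by
      by_contra! hb
      have := p.bound_zero i hb
      omega
    calc i < (Finset.range (i + 1)).card := by simp
      _ ≤ _ := Finset.card_le_card fun j hj => ?_
    simp only [Finset.mem_filter, Finset.mem_range] at hj ⊢
    exact ⟨by omega, h.trans (p.antitone (by omega))⟩

lemma height_antitone : Antitone p.height := fun _ _ hst =>
  Finset.card_le_card fun j hj => by
    simp only [Finset.mem_filter] at hj ⊢
    exact ⟨hj.1, (max_le_max_right 1 hst).trans hj.2⟩

lemma height_le_bound (s : ℕ) : p.height s ≤ p.bound :=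
  (Finset.card_filter_le _ _).trans (Finset.card_range _).le

lemma height_zero : p.height 0 = p.height 1 := by simp [height]

lemma partialSum_of_height_le {k : ℕ} (hk : p.height 1 ≤ k) : p.partialSum k = N :=
  p.partialSum_of_part_eq_zero (by have := (p.lt_height_iff le_rfl).not.1 hk.not_gt; omega)

lemma height_one_pos (hN : 0 < N) : 0 < p.height 1 := by
  by_contra! h
  have := p.partialSum_of_height_le (k := 0) (by omega)
  simp only [partialSum_zero] at this
  omega

lemma mult_add_height {s : ℕ} (hs : 1 ≤ s) : p.mult s + p.height (s + 1) = p.height s := by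
  rw [mult, height, height, max_eq_left hs, max_eq_left (by omega : 1 ≤ s + 1),
    ← Finset.card_union_of_disjoint (Finset.disjoint_filter.2 fun _ _ h h' => by omega),
    ← Finset.filter_or]
  congr 1
  ext j
  simp only [Finset.mem_filter]
  exact and_congr_right fun _ => ⟨fun h => by omega, fun h => by omega⟩

lemma part_eq_of_mem_block {v j : ℕ} (hv : 1 ≤ v) (h₁ : p.height (v + 1) ≤ j)
    (h₂ : j < p.height v) : p.part j = v := by
  have h₃ := (p.lt_height_iff hv).1 h₂
  have h₄ := (p.lt_height_iff (by omega : 1 ≤ v + 1)).not.1 h₁.not_gt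
  exact le_antisymm (Nat.le_of_lt_succ (not_le.1 h₄)) h₃

lemma partialSum_of_mem_block {v j : ℕ} (hv : 1 ≤ v) (h₁ : p.height (v + 1) ≤ j)
    (h₂ : j ≤ p.height v) :
    p.partialSum j = p.partialSum (p.height (v + 1)) + (j - p.height (v + 1)) * v := by
  induction j, h₁ using Nat.le_induction with
  | base => simp
  | succ j hj ih =>
    rw [p.partialSum_succ, ih (by omega), p.part_eq_of_mem_block hv hj (by omega),
      Nat.sub_add_comm hj, Nat.succ_mul]
    ring

lemma partialSum_height {s : ℕ} (hs : 1 ≤ s) :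
    p.partialSum (p.height s) = p.partialSum (p.height (s + 1)) + p.mult s * s := by
  rw [p.partialSum_of_mem_block hs (p.height_antitone (Nat.le_succ s)) le_rfl,
    ← p.mult_add_height hs, Nat.add_sub_cancel]

end Basic

def IsCorner (p : Partition' N) (k : ℕ) : Prop := 1 ≤ k ∧ p.part k < p.part (k - 1)

def IsDefect (c : ℕ) (p : Partition' N) (k : ℕ) : Prop := (p.partialSum k + c * k) % 2 = 1

section Corners

variable (p : Partition' N)

lemma isCorner_height {s : ℕ} (hs : 1 ≤ s) (h : 1 ≤ p.height s) : p.IsCorner (p.height s) :=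
  ⟨h, by
    have := (p.lt_height_iff hs).not.1 (lt_irrefl _)
    have := (p.lt_height_iff hs).1 (Nat.sub_lt h one_pos)
    omega⟩

lemma IsCorner.height_part {p : Partition' N} {k : ℕ} (h : p.IsCorner k) :
    p.height (p.part (k - 1)) = k := by
  obtain ⟨hk, hlt⟩ := h
  have hv : 1 ≤ p.part (k - 1) := by omega
  refine le_antisymm (not_lt.1 fun h => ?_) ?_
  · have := (p.lt_height_iff hv).1 h
    omega
  · have := (p.lt_height_iff hv).2 le_rfl
    omega

lemma part_pred_eq_of_not_isCorner {k : ℕ} (hk : 1 ≤ k) (h : ¬ p.IsCorner k) :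
    p.part (k - 1) = p.part k :=
  le_antisymm (not_lt.1 fun hlt => h ⟨hk, hlt⟩) (p.antitone (Nat.sub_le k 1))

lemma part_height_sub_one {s : ℕ} (hs : 1 ≤ s) (hm : p.mult s ≠ 0) :
    p.part (p.height s - 1) = s := by
  have := p.mult_add_height hs
  exact p.part_eq_of_mem_block hs (by omega) (by omega)

lemma isDefect_iff_of_mem_block {c v j : ℕ} (hv : 1 ≤ v) (hvc : (v + c) % 2 = 0)
    (h₁ : p.height (v + 1) ≤ j) (h₂ : j ≤ p.height v) :
    p.IsDefect c j ↔ p.IsDefect c (p.height (v + 1)) := by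
  have hj := p.partialSum_of_mem_block hv h₁ h₂
  obtain ⟨d, rfl⟩ := Nat.exists_eq_add_of_le h₁
  rw [Nat.add_sub_cancel_left] at hj
  have hmul : d * (v + c) % 2 = 0 := by rw [Nat.mul_mod, hvc, mul_zero, Nat.zero_mod]
  have key : p.partialSum (p.height (v + 1) + d) + c * (p.height (v + 1) + d) =
      p.partialSum (p.height (v + 1)) + c * p.height (v + 1) + d * (v + c) := by
    rw [hj]; ring
  unfold IsDefect
  rw [key]
  omega

lemma partialSum_height_add_mul {c s : ℕ} (hs : 1 ≤ s) :
    p.partialSum (p.height s) + c * p.height s =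
      p.partialSum (p.height (s + 1)) + c * p.height (s + 1) + p.mult s * (s + c) := by
  rw [p.partialSum_height hs, ← p.mult_add_height hs]
  ring

end Corners

section EvenMult

variable {e c : ℕ} {p : Partition' N}

lemma EvenMult.not_isDefect_height (hec : e + c = 1) (hp : EvenMult e p) {s : ℕ} (hs : 1 ≤ s) :
    ¬ p.IsDefect c (p.height s) := by
  -- downward induction on `s`: going from `s + 1` to `s` adds the even `p.mult s * (s + c)`
  obtain ⟨d, hd⟩ : ∃ d, p.part 0 < s + d := ⟨p.part 0 + 1, by omega⟩
  induction d generalizing s with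
  | zero =>
    have : p.height s = 0 := by
      by_contra h
      have := (p.lt_height_iff hs).1 (Nat.pos_of_ne_zero h)
      omega
    simp [IsDefect, this]
  | succ d ih =>
    have hmul : p.mult s * (s + c) % 2 = 0 := by
      by_cases hse : s % 2 = e % 2
      · rw [Nat.mul_mod, hp s hs hse, zero_mul, Nat.zero_mod]
      · rw [Nat.mul_mod, (by omega : (s + c) % 2 = 0), mul_zero, Nat.zero_mod]
    have := ih (s := s + 1) (by omega) (by omega)
    have := p.partialSum_height_add_mul (c := c) hs
    unfold IsDefect at *
    omega

lemma evenMult_iff (hec : e + c = 1) :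
    EvenMult e p ↔ ∀ k, p.IsCorner k → ¬ p.IsDefect c k := by
  refine ⟨fun hp k hk => hk.height_part ▸ hp.not_isDefect_height hec (by have := hk.2; omega),
    fun h s hs hse => ?_⟩
  have hheight : ∀ t, 1 ≤ t → ¬ p.IsDefect c (p.height t) := fun t ht => by
    rcases Nat.eq_zero_or_pos (p.height t) with h0 | hpos
    · simp [IsDefect, h0]
    · exact h _ (p.isCorner_height ht hpos)
  have hmul : p.mult s * (s + c) % 2 = p.mult s % 2 := by
    rw [Nat.mul_mod, (by omega : (s + c) % 2 = 1), mul_one, Nat.mod_mod]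
  have := hheight s hs
  have := hheight (s + 1) (by omega)
  have := p.partialSum_height_add_mul (c := c) hs
  unfold IsDefect at *
  omega

end EvenMult

/-- The positions whose partial sums the collapse lowers by one. -/
def InDefectRun (c : ℕ) (p : Partition' N) (k : ℕ) : Prop :=
  ∃ a b, a ≤ k ∧ k ≤ b ∧ p.IsCorner a ∧ p.IsCorner b ∧
    ∀ j, a ≤ j → j ≤ b → p.IsDefect c j

section DefectRun

variable {c : ℕ} {p : Partition' N} {k : ℕ}

lemma InDefectRun.isDefect (h : p.InDefectRun c k) : p.IsDefect c k := by
  obtain ⟨a, b, hak, hkb, -, -, hrun⟩ := h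
  exact hrun k hak hkb

lemma InDefectRun.one_le (h : p.InDefectRun c k) : 1 ≤ k := by
  obtain ⟨a, b, hak, -, ha, -⟩ := h
  exact ha.1.trans hak

lemma InDefectRun.le_height_one (h : p.InDefectRun c k) : k ≤ p.height 1 := by
  obtain ⟨a, b, -, hkb, -, hb, -⟩ := h
  have := (p.lt_height_iff le_rfl).2 (by have := hb.2; omega : 1 ≤ p.part (b - 1))
  have := hb.1
  omega

lemma not_inDefectRun_of_bound_lt (hk : p.bound < k) : ¬ p.InDefectRun c k := fun h => by
  have := h.le_height_one
  have := p.height_le_bound 1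
  omega

lemma InDefectRun.succ_of_not_isCorner (h : p.InDefectRun c k) (hk : ¬ p.IsCorner k) :
    p.InDefectRun c (k + 1) := by
  obtain ⟨a, b, hak, hkb, ha, hb, hrun⟩ := h
  have : k ≠ b := by rintro rfl; exact hk hb
  exact ⟨a, b, by omega, by omega, ha, hb, hrun⟩

lemma InDefectRun.pred_of_not_isCorner (h : p.InDefectRun c (k + 1))
    (hk : ¬ p.IsCorner (k + 1)) : p.InDefectRun c k := by
  obtain ⟨a, b, hak, hkb, ha, hb, hrun⟩ := h
  have : k + 1 ≠ a := by rintro rfl; exact hk ha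
  exact ⟨a, b, by omega, by omega, ha, hb, hrun⟩

/-- Two consecutive defects force a whole block of equal parts to consist of defects, and the
ends of that block are corners. -/
lemma inDefectRun_of_isDefect_of_isDefect_succ (hc : c ≤ 1) (hN : c = 0 → N % 2 = 0)
    (h₀ : p.IsDefect c k) (h₁ : p.IsDefect c (k + 1)) :
    p.InDefectRun c k ∧ p.InDefectRun c (k + 1) := by
  set v := p.part k with hv_def
  have hsucc := p.partialSum_succ k
  have hvc : (v + c) % 2 = 0 := by
    unfold IsDefect at h₀ h₁
    rw [hsucc, mul_add, mul_one] at h₁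
    omega
  have hv : 1 ≤ v := by
    by_contra! hv0
    obtain rfl : c = 0 := by omega
    have hSN := p.partialSum_of_part_eq_zero (by omega : p.part k = 0)
    have := hN rfl
    simp only [IsDefect, zero_mul, add_zero] at h₀
    omega
  have ha : p.height (v + 1) ≤ k := not_lt.1 ((p.lt_height_iff (by omega)).not.2 (by omega))
  have hb : k + 1 ≤ p.height v := (p.lt_height_iff hv).2 le_rfl
  have hrun : ∀ j, p.height (v + 1) ≤ j → j ≤ p.height v → p.IsDefect c j :=
    fun j hj₁ hj₂ =>
    (p.isDefect_iff_of_mem_block hv hvc hj₁ hj₂).2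
      ((p.isDefect_iff_of_mem_block hv hvc ha (by omega)).1 h₀)
  have ha₁ : 1 ≤ p.height (v + 1) := by
    by_contra! h0
    have := hrun 0 (by omega) (by omega)
    simp [IsDefect] at this
  have hca := p.isCorner_height (by omega) ha₁
  have hcb := p.isCorner_height hv (by omega)
  exact ⟨⟨_, _, ha, by omega, hca, hcb, hrun⟩, ⟨_, _, by omega, hb, hca, hcb, hrun⟩⟩

end DefectRun

open Classical in
noncomputable def collapseDefect (c : ℕ) (p : Partition' N) (k : ℕ) : ℕ :=
  if p.InDefectRun c k then 1 else 0

section Collapse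

variable {c : ℕ} (p : Partition' N)

lemma collapseDefect_of_inDefectRun {k : ℕ} (h : p.InDefectRun c k) : p.collapseDefect c k = 1 :=
  if_pos h

lemma collapseDefect_of_not_inDefectRun {k : ℕ} (h : ¬ p.InDefectRun c k) :
    p.collapseDefect c k = 0 :=
  if_neg h

lemma collapseDefect_le_one (k : ℕ) : p.collapseDefect c k ≤ 1 := by
  unfold collapseDefect
  split_ifs <;> omega

lemma collapseDefect_succ_le (i : ℕ) :
    p.collapseDefect c (i + 1) ≤ p.part i + p.collapseDefect c i := by
  by_cases h : p.InDefectRun c (i + 1)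
  · have := (p.lt_height_iff le_rfl).1 (by have := h.le_height_one; omega : i < p.height 1)
    have := p.collapseDefect_le_one (c := c) (i + 1)
    omega
  · rw [p.collapseDefect_of_not_inDefectRun h]
    omega

noncomputable def collapsePart (c : ℕ) (p : Partition' N) (i : ℕ) : ℕ :=
  p.part i + p.collapseDefect c i - p.collapseDefect c (i + 1)

lemma sum_collapsePart (k : ℕ) :
    ∑ i ∈ Finset.range k, p.collapsePart c i + p.collapseDefect c k = p.partialSum k := by
  induction k with
  | zero =>
    have : ¬ p.InDefectRun c 0 := fun h => by have := h.one_le; omega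
    simp [p.collapseDefect_of_not_inDefectRun this]
  | succ k ih =>
    have := p.collapseDefect_succ_le (c := c) k
    rw [Finset.sum_range_succ, p.partialSum_succ, collapsePart]
    omega

lemma collapsePart_succ_le (hc : c ≤ 1) (hN : c = 0 → N % 2 = 0) (i : ℕ) :
    p.collapsePart c (i + 1) ≤ p.collapsePart c i := by
  have hle := p.antitone (Nat.le_add_right i 1)
  have h₀ := p.collapseDefect_le_one (c := c) i
  have h₂ := p.collapseDefect_le_one (c := c) (i + 1 + 1)
  have hw := p.collapseDefect_succ_le (c := c) i
  unfold collapsePart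
  by_cases h₁ : p.InDefectRun c (i + 1)
  swap
  · rw [p.collapseDefect_of_not_inDefectRun h₁]
    omega
  rw [p.collapseDefect_of_inDefectRun h₁]
  by_cases hboth : p.InDefectRun c i ∧ p.InDefectRun c (i + 1 + 1)
  · rw [p.collapseDefect_of_inDefectRun hboth.1, p.collapseDefect_of_inDefectRun hboth.2]
    omega
  have hcorner : p.IsCorner (i + 1) := by
    by_contra hnc
    exact hboth ⟨h₁.pred_of_not_isCorner hnc, h₁.succ_of_not_isCorner hnc⟩
  have hlt : p.part (i + 1) < p.part i := hcorner.2
  by_cases hi : p.InDefectRun c i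
  · rw [p.collapseDefect_of_inDefectRun hi,
      p.collapseDefect_of_not_inDefectRun fun h => hboth ⟨hi, h⟩]
    omega
  by_cases hi₂ : p.InDefectRun c (i + 1 + 1)
  · rw [p.collapseDefect_of_not_inDefectRun hi, p.collapseDefect_of_inDefectRun hi₂]
    omega
  rw [p.collapseDefect_of_not_inDefectRun hi, p.collapseDefect_of_not_inDefectRun hi₂]
  -- an isolated defect at `i + 1` gives `p.part i ≡ p.part (i + 1) (mod 2)`: the drop is `≥ 2`
  have hd₁ := h₁.isDefect
  have hd₀ : ¬ p.IsDefect c i := fun hd =>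
    hi (inDefectRun_of_isDefect_of_isDefect_succ hc hN hd hd₁).1
  have hd₂ : ¬ p.IsDefect c (i + 1 + 1) := fun hd =>
    hi₂ (inDefectRun_of_isDefect_of_isDefect_succ hc hN hd₁ hd).2
  have := p.partialSum_succ i
  have := p.partialSum_succ (i + 1)
  unfold IsDefect at hd₀ hd₁ hd₂
  simp only [mul_add, mul_one] at hd₁ hd₂
  omega

noncomputable def collapse (c : ℕ) (p : Partition' N) (hc : c ≤ 1) (hN : c = 0 → N % 2 = 0) :
    Partition' N where
  part := p.collapsePart c
  antitone := antitone_nat_of_succ_le (p.collapsePart_succ_le hc hN)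
  bound := p.bound + 1
  bound_zero i hi := by
    rw [collapsePart, p.bound_zero i (by omega),
      p.collapseDefect_of_not_inDefectRun (not_inDefectRun_of_bound_lt (by omega)),
      p.collapseDefect_of_not_inDefectRun (not_inDefectRun_of_bound_lt (by omega))]
  sum_parts := by
    have := p.sum_collapsePart (c := c) (p.bound + 1)
    rwa [p.collapseDefect_of_not_inDefectRun (not_inDefectRun_of_bound_lt (by omega)), add_zero,
      p.partialSum_of_bound_le (by omega)] at this

end Collapse

section Characterization

variable {e c : ℕ}

lemma partialSum_collapse (p : Partition' N) (hc : c ≤ 1) (hN : c = 0 → N % 2 = 0) (k : ℕ) :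
    (p.collapse c hc hN).partialSum k + p.collapseDefect c k = p.partialSum k :=
  p.sum_collapsePart k

lemma evenMult_collapse (hec : e + c = 1) (p : Partition' N) (hc : c ≤ 1)
    (hN : c = 0 → N % 2 = 0) : EvenMult e (p.collapse c hc hN) := by
  refine (evenMult_iff hec).2 fun k hk hd => ?_
  have hS := p.partialSum_collapse hc hN k
  by_cases hrun : p.InDefectRun c k
  · have := hrun.isDefect
    rw [p.collapseDefect_of_inDefectRun hrun] at hS
    unfold IsDefect at *
    omega
  refine hrun ?_
  rw [p.collapseDefect_of_not_inDefectRun hrun, add_zero] at hS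
  have hpd : p.IsDefect c k := by unfold IsDefect at *; omega
  obtain ⟨j, rfl⟩ := Nat.exists_eq_add_of_le' hk.1
  by_cases hprev : p.InDefectRun c j
  · exact (inDefectRun_of_isDefect_of_isDefect_succ hc hN hprev.isDefect hpd).2
  by_cases hnext : p.InDefectRun c (j + 1 + 1)
  · exact (inDefectRun_of_isDefect_of_isDefect_succ hc hN hpd hnext.isDefect).1
  -- neither neighbour is lowered, so the corner of the collapse at `j + 1` is a corner of `p`
  have hcorner : p.IsCorner (j + 1) := by
    have := hk.2
    simp only [collapse, collapsePart, Nat.add_sub_cancel,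
      p.collapseDefect_of_not_inDefectRun hprev, p.collapseDefect_of_not_inDefectRun hrun,
      p.collapseDefect_of_not_inDefectRun hnext] at this
    exact ⟨hk.1, by simpa using this⟩
  exact ⟨j + 1, j + 1, le_rfl, le_rfl, hcorner, hcorner,
    fun i h₁ h₂ => le_antisymm h₂ h₁ ▸ hpd⟩

lemma dominates_of_partialSum_le_add_one (hec : e + c = 1) {r ν : Partition' N}
    (hr : EvenMult e r) (hle : ∀ k, r.partialSum k ≤ ν.partialSum k + 1)
    (hpar : ∀ k, r.partialSum k = ν.partialSum k + 1 → ¬ ν.IsDefect c k) :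
    Dominates ν r := by
  suffices ∀ d k, max r.bound ν.bound ≤ k + d → r.partialSum k ≤ ν.partialSum k from
    fun k => this _ k (Nat.le_add_left _ _)
  intro d
  induction d with
  | zero =>
    intro k hk
    rw [r.partialSum_of_bound_le (by omega), ν.partialSum_of_bound_le (by omega)]
  | succ d ih =>
    intro k hk
    by_contra! hlt
    have heq : r.partialSum k = ν.partialSum k + 1 := le_antisymm (hle k) hlt
    have hk : 1 ≤ k := Nat.pos_of_ne_zero fun h => by simp [h] at heq
    have hflat := r.part_pred_eq_of_not_isCorner hk fun hc =>
      (evenMult_iff hec).1 hr k hc (by have := hpar k heq; unfold IsDefect at *; omega)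
    -- flat `r` against concave `ν`, using `r ≤ ν + 1` at `k - 1` and `r ≤ ν` at `k + 1`
    obtain ⟨j, rfl⟩ := Nat.exists_eq_add_of_le' hk
    have := r.partialSum_succ j
    have := r.partialSum_succ (j + 1)
    have := ν.partialSum_succ j
    have := ν.partialSum_succ (j + 1)
    have := ν.antitone (Nat.le_add_right j 1)
    have := ih (j + 1 + 1) (by omega)
    have := hle j
    simp only [Nat.add_sub_cancel] at hflat
    omega

lemma isCollapse_of_partialSum_eq_or (hec : e + c = 1) {lam ν : Partition' N}
    (hν : EvenMult e ν)
    (h : ∀ k, lam.partialSum k = ν.partialSum k ∨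
      (lam.partialSum k = ν.partialSum k + 1 ∧ ¬ ν.IsDefect c k)) :
    IsCollapse e lam ν := by
  refine ⟨hν, dominates_iff.2 fun k => by rcases h k with h | h <;> omega, fun r hr hdom => ?_⟩
  refine dominates_of_partialSum_le_add_one hec hr (fun k => ?_) fun k hk => ?_
  · have := dominates_iff.1 hdom k
    rcases h k with h | h <;> omega
  · have := dominates_iff.1 hdom k
    rcases h k with h' | h'
    · omega
    · exact h'.2

lemma isCollapse_collapse (hec : e + c = 1) (p : Partition' N) (hc : c ≤ 1)
    (hN : c = 0 → N % 2 = 0) : IsCollapse e p (p.collapse c hc hN) := by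
  refine isCollapse_of_partialSum_eq_or hec (evenMult_collapse hec p hc hN) fun k => ?_
  have hS := p.partialSum_collapse hc hN k
  by_cases hrun : p.InDefectRun c k
  · rw [p.collapseDefect_of_inDefectRun hrun] at hS
    have := hrun.isDefect
    right
    unfold IsDefect at *
    omega
  · rw [p.collapseDefect_of_not_inDefectRun hrun] at hS
    omega

lemma IsCollapse.part_eq {lam q q' : Partition' N} (h : IsCollapse e lam q)
    (h' : IsCollapse e lam q') : q.part = q'.part :=
  q.part_eq_of_dominates (h.2.2 q' h'.1 h'.2.1) (h'.2.2 q h.1 h.2.1)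

lemma IsCollapse.partialSum_add_collapseDefect (hec : e + c = 1) (hN : c = 0 → N % 2 = 0)
    {lam q : Partition' N} (h : IsCollapse e lam q) (k : ℕ) :
    q.partialSum k + lam.collapseDefect c k = lam.partialSum k := by
  have hcol := lam.isCollapse_collapse hec (by omega) hN
  rw [← lam.partialSum_collapse (by omega) hN k, partialSum, partialSum, h.part_eq hcol]

lemma IsCollapse.not_inDefectRun_of_isDefect (hec : e + c = 1) (hN : c = 0 → N % 2 = 0)
    {lam q : Partition' N} (h : IsCollapse e lam q) {k : ℕ} (hd : q.IsDefect c k) :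
    ¬ lam.InDefectRun c k ∧ lam.IsDefect c k := by
  have hS := h.partialSum_add_collapseDefect hec hN k
  have hrun : ¬ lam.InDefectRun c k := fun hrun => by
    have := hrun.isDefect
    rw [lam.collapseDefect_of_inDefectRun hrun] at hS
    unfold IsDefect at *
    omega
  rw [lam.collapseDefect_of_not_inDefectRun hrun] at hS
  exact ⟨hrun, by unfold IsDefect at *; omega⟩

end Characterization

section MinusPlus

variable {p : Partition' M} {q : Partition' N}

lemma IsMinus.partialSum_of_lt (h : IsMinus p q) {k : ℕ} (hk : k < p.height 0) :
    q.partialSum k = p.partialSum k :=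
  Finset.sum_congr rfl fun i hi => h.1 i (by simp only [Finset.mem_range] at hi; omega)

lemma IsMinus.partialSum_of_le (h : IsMinus p q) {k : ℕ} (hk : p.height 0 ≤ k) :
    q.partialSum k = N := by
  have hq : q.part (p.height 0) = 0 := by
    rw [h.1 _ (by omega), p.height_zero]
    have := (p.lt_height_iff le_rfl).not.1 (lt_irrefl _)
    omega
  exact le_antisymm (q.partialSum_le k)
    ((q.partialSum_of_part_eq_zero hq).symm.trans_le (q.partialSum_mono hk))

lemma IsPlus.partialSum (h : IsPlus p q) {k : ℕ} (hk : 1 ≤ k) :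
    q.partialSum k = p.partialSum k + 1 := by
  induction k, hk using Nat.le_induction with
  | base => rw [q.partialSum_succ, p.partialSum_succ, h.1]; simp
  | succ k hk ih => rw [q.partialSum_succ, p.partialSum_succ, ih, h.2 k hk]; ring

end MinusPlus

section SpecialCond

variable {n : ℕ}

lemma SpecialCond.inDefectRun_of_isMinus {p : Partition' M} {pm : Partition' N}
    (hp : p.SpecialCond 0 1) (hm : IsMinus p pm) (hN : N % 2 = 0) {k : ℕ} (hk : 1 ≤ k)
    (hkℓ : k < p.height 0) (hd : p.IsDefect 1 k) : pm.InDefectRun 0 k := by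
  have hB := (evenMult_iff (e := 0) (c := 1) rfl).1 hp.1
  have hflat := p.part_pred_eq_of_not_isCorner hk fun hc => hB k hc hd
  obtain ⟨j, rfl⟩ := Nat.exists_eq_add_of_le' hk
  simp only [Nat.add_sub_cancel] at hflat
  set v := p.part (j + 1) with hv_def
  have hv : 1 ≤ v := (p.lt_height_iff le_rfl).1 (p.height_zero ▸ hkℓ)
  have ha : p.height (v + 1) ≤ j := not_lt.1 ((p.lt_height_iff (by omega)).not.2 (by omega))
  have hb : j + 2 ≤ p.height v := (p.lt_height_iff hv).2 le_rfl
  have hveven : v % 2 = 0 := by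
    by_contra hodd
    exact hp.1.not_isDefect_height (c := 1) rfl (by omega : 1 ≤ v + 1)
      ((p.isDefect_iff_of_mem_block hv (by omega) (by omega) (by omega)).1 hd)
  have hbodd : p.height v % 2 = 1 :=
    hp.2.1 v hv (by have := p.mult_add_height hv; omega) hveven
  have hbd : p.IsDefect 0 (p.height v) := by
    have := hB _ (p.isCorner_height hv (by omega))
    unfold IsDefect at *
    omega
  have hblock : ∀ i, j ≤ i → i ≤ j + 1 → pm.IsDefect 0 i := fun i hi₁ hi₂ => by
    have := (p.isDefect_iff_of_mem_block (j := i) hv (by omega) (by omega) (by omega)).2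
      ((p.isDefect_iff_of_mem_block hv (by omega) (by omega) le_rfl).1 hbd)
    unfold IsDefect at *
    rwa [hm.partialSum_of_lt (by omega)]
  exact (inDefectRun_of_isDefect_of_isDefect_succ (by omega) (fun _ => hN)
    (hblock j le_rfl (by omega)) (hblock (j + 1) (by omega) le_rfl)).2

lemma SpecialCond.inDefectRun_of_isPlus {q : Partition' N} {pp : Partition' M}
    (hq : q.SpecialCond 1 0) (hpl : IsPlus q pp) (hN : N % 2 = 0) {k : ℕ} (hk : 1 ≤ k)
    (hd : q.IsDefect 0 k) : pp.InDefectRun 1 k := by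
  have hC := (evenMult_iff (e := 1) (c := 0) rfl).1 hq.1
  have hkℓ : k < q.height 1 := by
    by_contra! h
    have := q.partialSum_of_height_le h
    unfold IsDefect at hd
    omega
  have hflat := q.part_pred_eq_of_not_isCorner hk fun hc => hC k hc hd
  set v := q.part k with hv_def
  have hv : 1 ≤ v := (q.lt_height_iff le_rfl).1 hkℓ
  have ha : q.height (v + 1) ≤ k - 1 := not_lt.1 ((q.lt_height_iff (by omega)).not.2 (by omega))
  have hb : k + 1 ≤ q.height v := (q.lt_height_iff hv).2 le_rfl
  have hvodd : v % 2 = 1 := by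
    by_contra heven
    exact hq.1.not_isDefect_height (c := 0) rfl (by omega : 1 ≤ v + 1)
      ((q.isDefect_iff_of_mem_block hv (by omega) (by omega) (by omega)).1 hd)
  have hmult := q.mult_add_height hv
  have hbeven : q.height v % 2 = 0 := hq.2.1 v hv (by omega) hvodd
  have hmeven : q.mult v % 2 = 0 := hq.1 v hv hvodd
  have ha_good : ¬ q.IsDefect 1 (q.height (v + 1)) := by
    have := hq.1.not_isDefect_height (c := 0) rfl (by omega : 1 ≤ v + 1)
    unfold IsDefect at *
    omega
  have hblock :
      ∀ i, 1 ≤ i → q.height (v + 1) ≤ i → i ≤ q.height v → pp.IsDefect 1 i :=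
    fun i hi₀ hi₁ hi₂ => by
      have := (q.isDefect_iff_of_mem_block hv (by omega) hi₁ hi₂).not.2 ha_good
      have := hpl.partialSum hi₀
      unfold IsDefect at *
      omega
  exact (inDefectRun_of_isDefect_of_isDefect_succ le_rfl (by simp)
    (hblock k hk (by omega) (by omega)) (hblock (k + 1) (by omega) (by omega) hb)).1

lemma specialCond_of_isFBC {p : Partition' (2 * n + 1)} {q : Partition' (2 * n)}
    (hp : p.SpecialCond 0 1) (h : IsFBC n p q) : q.SpecialCond 1 0 := by
  obtain ⟨pm, hm, hcol⟩ := h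
  refine ⟨hcol.1, fun s hs hmult hsodd => ?_, by simp⟩
  have hK : 1 ≤ q.height s := by have := q.mult_add_height hs; omega
  have hcorner := (evenMult_iff (e := 1) (c := 0) rfl).1 hcol.1 _ (q.isCorner_height hs hK)
  have hsplit := q.partialSum_succ (q.height s - 1)
  rw [Nat.sub_add_cancel hK, q.part_height_sub_one hs hmult] at hsplit
  have hqd : q.IsDefect 0 (q.height s - 1) := by unfold IsDefect at *; omega
  obtain ⟨hrun, hpmd⟩ := hcol.not_inDefectRun_of_isDefect (c := 0) rfl (fun _ => by omega) hqd
  have hK₁ : 1 ≤ q.height s - 1 := Nat.pos_of_ne_zero fun h => by simp [IsDefect, h] at hqd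
  have hKℓ : q.height s - 1 < p.height 0 := by
    by_contra! hle
    have := hm.partialSum_of_le hle
    unfold IsDefect at hpmd
    omega
  have := hm.partialSum_of_lt hKℓ
  by_contra hKodd
  exact hrun (hp.inDefectRun_of_isMinus hm (by omega) hK₁ hKℓ
    (by unfold IsDefect at *; omega))

lemma specialCond_of_isFCB {q : Partition' (2 * n)} {p : Partition' (2 * n + 1)}
    (hq : q.SpecialCond 1 0) (h : IsFCB n q p) : p.SpecialCond 0 1 := by
  obtain ⟨pp, hpl, hcol⟩ := h
  have hB := (evenMult_iff (e := 0) (c := 1) rfl).1 hcol.1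
  refine ⟨hcol.1, fun s hs hmult hseven => ?_, fun _ => ?_⟩
  · have hK : 1 ≤ p.height s := by have := p.mult_add_height hs; omega
    have hcorner := hB _ (p.isCorner_height hs hK)
    have hsplit := p.partialSum_succ (p.height s - 1)
    rw [Nat.sub_add_cancel hK, p.part_height_sub_one hs hmult] at hsplit
    have hpd : p.IsDefect 1 (p.height s - 1) := by unfold IsDefect at *; omega
    obtain ⟨hrun, hppd⟩ := hcol.not_inDefectRun_of_isDefect (c := 1) rfl (by simp) hpd
    have hK₁ : 1 ≤ p.height s - 1 := Nat.pos_of_ne_zero fun h => by simp [IsDefect, h] at hpd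
    have := hpl.partialSum hK₁
    by_contra hKeven
    exact hrun (hq.inDefectRun_of_isPlus hpl (by omega) hK₁ (by unfold IsDefect at *; omega))
  · have hℓ := p.height_one_pos (by omega)
    have := hB _ (p.isCorner_height le_rfl hℓ)
    have := p.partialSum_of_height_le le_rfl
    rw [p.height_zero]
    unfold IsDefect at *
    omega

lemma isCollapse_of_isFBC {p : Partition' (2 * n + 1)} {q : Partition' (2 * n)}
    {qp : Partition' (2 * n + 1)} (hp : p.SpecialCond 0 1) (h : IsFBC n p q)
    (hqp : IsPlus q qp) : IsCollapse 0 qp p := by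
  obtain ⟨pm, hm, hcol⟩ := h
  refine isCollapse_of_partialSum_eq_or (c := 1) rfl hp.1 fun k => ?_
  rcases Nat.eq_zero_or_pos k with rfl | hk
  · simp
  have hS := hcol.partialSum_add_collapseDefect (c := 0) rfl (fun _ => by omega) k
  have := hqp.partialSum hk
  by_cases hkℓ : k < p.height 0
  · rw [hm.partialSum_of_lt hkℓ] at hS
    by_cases hrun : pm.InDefectRun 0 k
    · rw [pm.collapseDefect_of_inDefectRun hrun] at hS
      omega
    · rw [pm.collapseDefect_of_not_inDefectRun hrun] at hS
      exact Or.inr ⟨by omega, fun hd =>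
        hrun (hp.inDefectRun_of_isMinus hm (by omega) hk hkℓ hd)⟩
  · have hpm := hm.partialSum_of_le (not_lt.1 hkℓ)
    have hrun : ¬ pm.InDefectRun 0 k := fun hrun => by
      have := hrun.isDefect
      unfold IsDefect at this
      omega
    rw [pm.collapseDefect_of_not_inDefectRun hrun] at hS
    have := p.partialSum_of_height_le (p.height_zero ▸ not_lt.1 hkℓ)
    omega

lemma isCollapse_of_isFCB {q : Partition' (2 * n)} {p : Partition' (2 * n + 1)}
    {pm : Partition' (2 * n)} (hq : q.SpecialCond 1 0) (h : IsFCB n q p)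
    (hpm : IsMinus p pm) : IsCollapse 1 pm q := by
  obtain ⟨pp, hpl, hcol⟩ := h
  refine isCollapse_of_partialSum_eq_or (c := 0) rfl hq.1 fun k => ?_
  rcases Nat.eq_zero_or_pos k with rfl | hk
  · simp
  have hS := hcol.partialSum_add_collapseDefect (c := 1) rfl (by simp) k
  have := hpl.partialSum hk
  have := pp.collapseDefect_le_one (c := 1) k
  by_cases hkℓ : k < p.height 0
  · rw [hpm.partialSum_of_lt hkℓ]
    by_cases hrun : pp.InDefectRun 1 k
    · rw [pp.collapseDefect_of_inDefectRun hrun] at hS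
      omega
    · rw [pp.collapseDefect_of_not_inDefectRun hrun] at hS
      exact Or.inr ⟨by omega, fun hd => hrun (hq.inDefectRun_of_isPlus hpl (by omega) hk hd)⟩
  · have := p.partialSum_of_height_le (p.height_zero ▸ not_lt.1 hkℓ)
    have := q.partialSum_le k
    rw [hpm.partialSum_of_le (not_lt.1 hkℓ)]
    omega

end SpecialCond

end Partition'

/-- `f_{BC} : P^{sp}_B(2n+1) → P^{sp}_C(2n)` and
`f_{CB} : P^{sp}_C(2n) → P^{sp}_B(2n+1)` are mutually inverse bijections. -/
theorem fBC_fCB_mutuallyInverse (n : ℕ) :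
    (∀ (p : Partition' (2 * n + 1)) (q : Partition' (2 * n)),
      Partition'.SpecialCond 0 1 p → Partition'.IsFBC n p q →
      Partition'.SpecialCond 1 0 q ∧
        ∀ r : Partition' (2 * n + 1), Partition'.IsFCB n q r → r.part = p.part) ∧
    (∀ (q : Partition' (2 * n)) (p : Partition' (2 * n + 1)),
      Partition'.SpecialCond 1 0 q → Partition'.IsFCB n q p →
      Partition'.SpecialCond 0 1 p ∧
        ∀ r : Partition' (2 * n), Partition'.IsFBC n p r → r.part = q.part) := by
  refine ⟨fun p q hp hpq => ⟨Partition'.specialCond_of_isFBC hp hpq, ?_⟩,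
    fun q p hq hqp => ⟨Partition'.specialCond_of_isFCB hq hqp, ?_⟩⟩
  · rintro r ⟨qp, hqp, hr⟩
    exact hr.part_eq (Partition'.isCollapse_of_isFBC hp hpq hqp)
  · rintro r ⟨pm, hpm, hr⟩
    exact hr.part_eq (Partition'.isCollapse_of_isFCB hq hqp hpm)
end
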